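/- arXiv:1401.7076 — 8 statements merged into one kernel-verified Lean document; each statement's English description precedes it below -/
import Mathlib

section
/- Let Ω be a finite union of disjoint closed intervals with integer endpoints on the real line, with f₁ total unit cells and f₀⁰ inner vertices. Fix m ≥ 1 and suppose any two distinct connected components of Ω are separated by more than m−1 unit cells (i.e., Ω ∈ A¹_{m−1}). Then the number of intervals of the form [k, k+m+1] (k ∈ ℤ) that share at least one unit cell with Ω equals (m+1)·f₁ − m·f₀⁰. -/
open Set

noncomputable section

/-- The 1D admissibility class `A¹_k` for a set of cell indices (cell `a` = `[a, a+1]`):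
between any two neighboring connected components there are more than `k` cells,
i.e. for a maximal gap between cells `a` and `b` (with nothing in between) either they are
adjacent or the number `b - a - 1` of cells in the gap exceeds `k`. -/
def Adm1 (k : ℤ) (A : Set ℤ) : Prop :=
  ∀ a b : ℤ, a ∈ A → b ∈ A → a < b → (∀ c : ℤ, a < c → c < b → c ∉ A) →
    b = a + 1 ∨ k < b - a - 1

/-- Inner vertices of the 1D domain. -/
def innerVerts1 (S : Finset ℤ) : Finset ℤ := S.filter (fun k => k - 1 ∈ S)

/-- The number of intervals `[k, k+m+1]` sharing at least one unit cell with the domain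
equals `(m+1) f₁ − m f₀⁰` (stated additively). -/
theorem stmt1 (m : ℕ) (hm : 1 ≤ m) (S : Finset ℤ)
    (hadm : Adm1 ((m : ℤ) - 1) (↑S : Set ℤ)) :
    ({k : ℤ | ∃ j ∈ S, k ≤ j ∧ j ≤ k + m}).ncard + m * (innerVerts1 S).card
      = (m + 1) * S.card := by
  classical
  set L : Finset ℤ := S.filter (fun j => j - 1 ∉ S) with hL
  -- key gap fact: if j is a left endpoint and k ∈ S with k < j, then k < j - m
  have hgap : ∀ j ∈ L, ∀ k ∈ S, k < j → k < j - m := by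
    intro j hj k hk hkj
    simp only [hL, Finset.mem_filter] at hj
    obtain ⟨hjS, hj1⟩ := hj
    set F : Finset ℤ := S.filter (fun x => x < j) with hF
    have hkF : k ∈ F := by simp [hF, hk, hkj]
    have hFne : F.Nonempty := ⟨k, hkF⟩
    set a := F.max' hFne with ha
    have haF : a ∈ F := F.max'_mem hFne
    have haS : a ∈ S := (Finset.mem_filter.mp haF).1
    have haj : a < j := (Finset.mem_filter.mp haF).2
    have hmax : ∀ c : ℤ, a < c → c < j → c ∉ (↑S : Set ℤ) := by
      intro c hac hcj hcS
      have : c ∈ F := by simp [hF, hcj]; exact hcS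
      exact absurd (F.le_max' c this) (not_le.mpr hac)
    rcases hadm a j haS hjS haj hmax with h | h
    · exact (hj1 (by rw [show j - 1 = a by omega]; exact haS)).elim
    · have hka : k ≤ a := F.le_max' k hkF
      omega
  -- the covered set as a Finset
  set T : Finset ℤ := S ∪ L.biUnion (fun j => Finset.Ico (j - m) j) with hT
  have hset : ({k : ℤ | ∃ j ∈ S, k ≤ j ∧ j ≤ k + m}) = (↑T : Set ℤ) := by
    ext k
    simp only [Set.mem_setOf_eq, Finset.coe_union, Set.mem_union, hT,
      Finset.mem_coe, Finset.mem_union, Finset.mem_biUnion, Finset.mem_Ico]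
    constructor
    · rintro ⟨j, hjS, hkj, hjk⟩
      by_cases hkS : k ∈ S
      · exact Or.inl hkS
      right
      have hkj' : k < j := lt_of_le_of_ne hkj (fun h => hkS (h ▸ hjS))
      set F : Finset ℤ := S.filter (fun x => k < x ∧ x ≤ k + m) with hF
      have hjF : j ∈ F := by simp [hF, hjS, hkj', hjk]
      have hFne : F.Nonempty := ⟨j, hjF⟩
      set ℓ := F.min' hFne with hℓ
      have hℓF : ℓ ∈ F := F.min'_mem hFne
      have hℓS : ℓ ∈ S := (Finset.mem_filter.mp hℓF).1
      have hkℓ : k < ℓ := (Finset.mem_filter.mp hℓF).2.1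
      have hℓk : ℓ ≤ k + m := (Finset.mem_filter.mp hℓF).2.2
      refine ⟨ℓ, ?_, by omega, hkℓ⟩
      simp only [hL, Finset.mem_filter]
      refine ⟨hℓS, fun hc => ?_⟩
      by_cases h1 : k < ℓ - 1
      · have : ℓ - 1 ∈ F := by simp [hF, hc]; omega
        have := F.min'_le _ this
        omega
      · have : ℓ - 1 = k := by omega
        exact hkS (this ▸ hc)
    · rintro (hk | ⟨j, hjL, hk1, hk2⟩)
      · exact ⟨k, hk, le_refl k, by omega⟩
      · have hjS : j ∈ S := (Finset.mem_filter.mp hjL).1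
        exact ⟨j, hjS, by omega, by omega⟩
  rw [hset, Set.ncard_coe_finset]
  -- disjointness facts
  have hdisj1 : Disjoint S (L.biUnion (fun j => Finset.Ico (j - m) j)) := by
    rw [Finset.disjoint_right]
    intro k hk hkS
    obtain ⟨j, hjL, hj⟩ := Finset.mem_biUnion.mp hk
    rw [Finset.mem_Ico] at hj
    have := hgap j hjL k hkS hj.2
    omega
  have hdisj2 : ∀ j ∈ L, ∀ j' ∈ L, j ≠ j' →
      Disjoint (Finset.Ico (j - (m:ℤ)) j) (Finset.Ico (j' - (m:ℤ)) j') := by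
    have key : ∀ j ∈ L, ∀ j' ∈ L, j < j' →
        Disjoint (Finset.Ico (j - (m:ℤ)) j) (Finset.Ico (j' - (m:ℤ)) j') := by
      intro j hjL j' hj'L hlt
      have hjS : j ∈ S := (Finset.mem_filter.mp hjL).1
      have := hgap j' hj'L j hjS hlt
      rw [Finset.disjoint_left]
      intro k hk hk'
      rw [Finset.mem_Ico] at hk hk'
      omega
    intro j hjL j' hj'L hne
    rcases lt_or_gt_of_ne hne with h | h
    · exact key j hjL j' hj'L h
    · exact (key j' hj'L j hjL h).symm
  have hcardT : T.card = S.card + L.card * m := by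
    rw [hT, Finset.card_union_of_disjoint hdisj1, Finset.card_biUnion hdisj2]
    congr 1
    rw [Finset.sum_congr rfl (fun j _ => ?_), Finset.sum_const, smul_eq_mul]
    show (Finset.Ico (j - (m:ℤ)) j).card = m
    rw [Int.card_Ico]
    omega
  have hsplit : (innerVerts1 S).card + L.card = S.card := by
    have := Finset.card_filter_add_card_filter_not
      (s := S) (p := fun k => k - 1 ∈ S)
    simpa [innerVerts1, hL] using this
  rw [hcardT]
  set I := (innerVerts1 S).card
  set Lc := L.card
  set Sc := S.card
  calc Sc + Lc * m + m * I = Sc + m * (Lc + I) := by ring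
    _ = Sc + m * Sc := by rw [show Lc + I = Sc by omega]
    _ = (m + 1) * Sc := by ring
end
end

section
/- Let Ω₁, Ω₂ be finite unions of closed unit-integer cells on the line, each in class A¹₀ (i.e., unions of cells), and suppose both Ω₁ ∩ Ω₂ and (Ω₁)₁ᵉ ∩ (Ω₂)₁ᵉ are unions of cells of the respective grids (belong to A¹₀). Then (Ω₁)₁ᵉ ∩ (Ω₂)₁ᵉ = (Ω₁ ∩ Ω₂)₁ᵉ, where D₁ᵉ denotes the union of all closed intervals [v − 1/2, v + 1/2] over integer points v ∈ D. -/
open Set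

noncomputable section

/-- The 1D domain formed by the unit cells `[k, k+1]`, `k ∈ S`, of the integer grid `T'`. -/
def cellU1 (S : Finset ℤ) : Set ℝ := ⋃ k ∈ S, Set.Icc (k : ℝ) (k + 1)

/-- The dilatation `D₁ᵉ`: the union of the cells `[v - 1/2, v + 1/2]` of the
half-shifted grid `T'₁` whose centroids are integer points (vertices) of `D`. -/
def dil1 (D : Set ℝ) : Set ℝ :=
  ⋃ v ∈ {v : ℤ | (v : ℝ) ∈ D}, Set.Icc ((v : ℝ) - 1/2) ((v : ℝ) + 1/2)

/-- `D` belongs to `A¹₀` with respect to the integer grid: it is a finite union of cells. -/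
def IsCellDom (D : Set ℝ) : Prop := ∃ S : Finset ℤ, D = cellU1 S

/-- `D` belongs to `A¹₀` with respect to the half-shifted grid `T'₁`. -/
def IsCellDomShift (D : Set ℝ) : Prop :=
  ∃ S : Finset ℤ, D = ⋃ k ∈ S, Set.Icc ((k : ℝ) - 1/2) ((k : ℝ) + 1/2)

lemma int_mem_dil1 {D : Set ℝ} {k : ℤ} (h : (k : ℝ) ∈ dil1 D) : (k : ℝ) ∈ D := by
  simp only [dil1, mem_iUnion, mem_setOf_eq, mem_Icc] at h
  obtain ⟨v, hv, h1, h2⟩ := h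
  have : v = k := by
    have a : (2 : ℝ) * v - 1 ≤ 2 * k := by linarith
    have b : (2 : ℝ) * k ≤ 2 * v + 1 := by linarith
    have a' : 2 * v - 1 ≤ 2 * k := by exact_mod_cast a
    have b' : 2 * k ≤ 2 * v + 1 := by exact_mod_cast b
    omega
  rwa [this] at hv

lemma cell_subset_dil1 {D : Set ℝ} {k : ℤ} (h : (k : ℝ) ∈ D) :
    Set.Icc ((k : ℝ) - 1/2) ((k : ℝ) + 1/2) ⊆ dil1 D := fun x hx =>
  mem_biUnion (show k ∈ {v : ℤ | (v : ℝ) ∈ D} from h) hx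

theorem stmt3 (Ω₁ Ω₂ : Set ℝ) (h₁ : IsCellDom Ω₁) (h₂ : IsCellDom Ω₂)
    (hcap : IsCellDom (Ω₁ ∩ Ω₂)) (hcapdil : IsCellDomShift (dil1 Ω₁ ∩ dil1 Ω₂)) :
    dil1 Ω₁ ∩ dil1 Ω₂ = dil1 (Ω₁ ∩ Ω₂) := by
  obtain ⟨S, hS⟩ := hcapdil
  apply Subset.antisymm
  · nth_rewrite 1 [hS]
    refine iUnion₂_subset fun k hk => ?_
    have hkmem : (k : ℝ) ∈ dil1 Ω₁ ∩ dil1 Ω₂ := by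
      rw [hS]
      exact mem_biUnion hk ⟨by linarith, by linarith⟩
    have hΩ : (k : ℝ) ∈ Ω₁ ∩ Ω₂ := ⟨int_mem_dil1 hkmem.1, int_mem_dil1 hkmem.2⟩
    exact cell_subset_dil1 hΩ
  · refine iUnion₂_subset fun v hv => ?_
    exact subset_inter (cell_subset_dil1 hv.1) (cell_subset_dil1 hv.2)
end
end

section
/- Let Ω₁, Ω₂ be one-dimensional domains (finite unions of unit cells) each belonging to class A¹₁ (any two neighboring components separated by at least 2 cells), and suppose Ω₁ ∩ Ω₂ is again a finite union of unit cells. Then Ω₁ ∩ Ω₂ ∈ A¹₁. -/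
open Set

noncomputable section

/-- If `Ω₁, Ω₂ ∈ A¹₁` and `Ω₁ ∩ Ω₂` is again a union of unit cells
(i.e. `Ω₁ ∩ Ω₂ ∈ A¹₀`), then `Ω₁ ∩ Ω₂ ∈ A¹₁`. -/
theorem stmt4 (S₁ S₂ : Finset ℤ) (h₁ : Adm1 1 (↑S₁ : Set ℤ)) (h₂ : Adm1 1 (↑S₂ : Set ℤ))
    (hcap : cellU1 S₁ ∩ cellU1 S₂ = cellU1 (S₁ ∩ S₂)) :
    Adm1 1 (↑(S₁ ∩ S₂) : Set ℤ) := by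
  intro a b ha hb hab hgap
  simp only [Finset.coe_inter, Set.mem_inter_iff, Finset.mem_coe] at ha hb
  -- Either b = a+1, or b ≥ a+3, or b = a+2 which we rule out.
  rcases lt_trichotomy b (a + 2) with h | h | h
  · left; omega
  · -- b = a + 2 : contradiction
    exfalso
    have hmid : (a + 1 : ℤ) ∉ S₁ ∨ (a + 1 : ℤ) ∉ S₂ := by
      by_contra hc
      push_neg at hc
      exact hgap (a + 1) (by omega) (by omega)
        (by simp [Finset.mem_inter, hc.1, hc.2])
    rcases hmid with hm | hm
    · have := h₁ a b ha.1 hb.1 hab (fun c hc1 hc2 hcS => by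
        have : c = a + 1 := by omega
        exact hm (this ▸ hcS))
      omega
    · have := h₂ a b ha.2 hb.2 hab (fun c hc1 hc2 hcS => by
        have : c = a + 1 := by omega
        exact hm (this ▸ hcS))
      omega
  · right; omega
end
end

section
/- Let Ω be a planar domain formed by cells of the unit grid which is a 2-manifold with boundary, with cell/edge/vertex counts f₂, f₁^{h,0}, f₁^{v,0}, f₀⁰ as above. For nonnegative integers k₁, k₂, let Ω^e_{k₁,k₂} denote the dilatation of Ω by k₁/2 horizontally and k₂/2 vertically, and assume Ω ∈ A²_{k₁,k₂}. Then the number of cells of Ω^e_{k₁,k₂} equals (k₁+1)(k₂+1)f₂ − (k₁+1)k₂·f₁^{h,0} − (k₂+1)k₁·f₁^{v,0} + k₁k₂·f₀⁰. -/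
open Set

noncomputable section

/-- Cells of the planar integer grid, indexed by their lower-left corner. -/
def cellZ (p : ℤ × ℤ) : Set (ℝ × ℝ) :=
  Set.Icc (p.1 : ℝ) (p.1 + 1) ×ˢ Set.Icc (p.2 : ℝ) (p.2 + 1)

/-- The planar domain formed by the cells with indices in `S`. -/
def cellU (S : Finset (ℤ × ℤ)) : Set (ℝ × ℝ) := ⋃ p ∈ S, cellZ p

/-- The domain is a topological 2-manifold with boundary: no two cells meet only
at a corner (the inadmissible vertex configurations are excluded). -/
def ManifoldLike (S : Finset (ℤ × ℤ)) : Prop :=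
  ∀ i j : ℤ,
    ¬(((i - 1, j - 1) ∈ S ∧ (i, j) ∈ S ∧ (i - 1, j) ∉ S ∧ (i, j - 1) ∉ S) ∨
      ((i - 1, j) ∈ S ∧ (i, j - 1) ∈ S ∧ (i - 1, j - 1) ∉ S ∧ (i, j) ∉ S))

/-- Horizontal slice (row) of a planar cell domain. -/
def row (S : Finset (ℤ × ℤ)) (j : ℤ) : Set ℤ := {i | (i, j) ∈ S}

/-- Vertical slice (column) of a planar cell domain. -/
def col (S : Finset (ℤ × ℤ)) (i : ℤ) : Set ℤ := {j | (i, j) ∈ S}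

/-- Horizontal dilatation (combinatorially, on cell indices of the half-shifted grid). -/
def hdil (S : Finset (ℤ × ℤ)) : Finset (ℤ × ℤ) :=
  S ∪ S.image (fun p => (p.1 + 1, p.2))

/-- Vertical dilatation. -/
def vdil (S : Finset (ℤ × ℤ)) : Finset (ℤ × ℤ) :=
  S ∪ S.image (fun p => (p.1, p.2 + 1))

/-- The dilatation `Ω^e_{k₁,k₂}` (cell indices w.r.t. the suitably half-shifted grid). -/
def dil (S : Finset (ℤ × ℤ)) (k₁ k₂ : ℕ) : Finset (ℤ × ℤ) :=
  hdil^[k₁] (vdil^[k₂] S)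

/-- `Ω` admits a horizontal offset at distance 1/2: all rows `H(Ω)` and the consecutive
unions `σH(Ω)` are in `A¹₁`. -/
def rowAdmissible (S : Finset (ℤ × ℤ)) : Prop :=
  ∀ j : ℤ, Adm1 1 (row S j) ∧ Adm1 1 (row S j ∪ row S (j + 1))

/-- `Ω` admits a vertical offset at distance 1/2. -/
def colAdmissible (S : Finset (ℤ × ℤ)) : Prop :=
  ∀ i : ℤ, Adm1 1 (col S i) ∧ Adm1 1 (col S i ∪ col S (i + 1))

/-- The class `A²_{1,0}`. -/
def A210 (S : Finset (ℤ × ℤ)) : Prop := ManifoldLike S ∧ rowAdmissible S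

/-- The class `A²_{0,1}`. -/
def A201 (S : Finset (ℤ × ℤ)) : Prop := ManifoldLike S ∧ colAdmissible S

/-- The admissibility classes `A²_{k₁,k₂}`, defined inductively. -/
def A2 : ℕ → ℕ → Finset (ℤ × ℤ) → Prop
  | 0, 0, S => ManifoldLike S
  | k₁ + 1, k₂, S => A2 k₁ k₂ S ∧ A210 (dil S k₁ k₂)
  | 0, k₂ + 1, S => A2 0 k₂ S ∧ A201 (dil S 0 k₂)

/-- Horizontal inner edges (indexed by their left endpoint `(i,j)`: the edge from
`(i,j)` to `(i+1,j)`, inner iff the cells above and below are both present). -/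
def innerH (S : Finset (ℤ × ℤ)) : Set (ℤ × ℤ) :=
  {p | (p.1, p.2) ∈ S ∧ (p.1, p.2 - 1) ∈ S}

/-- Vertical inner edges. -/
def innerV (S : Finset (ℤ × ℤ)) : Set (ℤ × ℤ) :=
  {p | (p.1, p.2) ∈ S ∧ (p.1 - 1, p.2) ∈ S}

/-- Horizontal edges of the domain. -/
def edgesH (S : Finset (ℤ × ℤ)) : Set (ℤ × ℤ) :=
  {p | (p.1, p.2) ∈ S ∨ (p.1, p.2 - 1) ∈ S}

/-- Vertical edges of the domain. -/
def edgesV (S : Finset (ℤ × ℤ)) : Set (ℤ × ℤ) :=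
  {p | (p.1, p.2) ∈ S ∨ (p.1 - 1, p.2) ∈ S}

/-- Vertices of the domain. -/
def verts (S : Finset (ℤ × ℤ)) : Set (ℤ × ℤ) :=
  {p | (p.1, p.2) ∈ S ∨ (p.1 - 1, p.2) ∈ S ∨ (p.1, p.2 - 1) ∈ S ∨ (p.1 - 1, p.2 - 1) ∈ S}

/-- Inner vertices of the domain. -/
def innerVert (S : Finset (ℤ × ℤ)) : Set (ℤ × ℤ) :=
  {p | (p.1, p.2) ∈ S ∧ (p.1 - 1, p.2) ∈ S ∧ (p.1, p.2 - 1) ∈ S ∧ (p.1 - 1, p.2 - 1) ∈ S}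



lemma hshiftInj : Function.Injective (fun p : ℤ × ℤ => (p.1 + 1, p.2)) := by
  rintro ⟨a, b⟩ ⟨c, d⟩ h
  simp only [Prod.mk.injEq] at h ⊢
  omega

lemma vshiftInj : Function.Injective (fun p : ℤ × ℤ => (p.1, p.2 + 1)) := by
  rintro ⟨a, b⟩ ⟨c, d⟩ h
  simp only [Prod.mk.injEq] at h ⊢
  omega

lemma innerH_eq_coe (T : Finset (ℤ × ℤ)) :
    innerH T = ↑(T.filter fun p => (p.1, p.2 - 1) ∈ T) := by
  ext ⟨x, y⟩; simp [innerH]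

lemma innerV_eq_coe (T : Finset (ℤ × ℤ)) :
    innerV T = ↑(T.filter fun p => (p.1 - 1, p.2) ∈ T) := by
  ext ⟨x, y⟩; simp [innerV]

lemma innerVert_eq_coe (T : Finset (ℤ × ℤ)) :
    innerVert T = ↑(T.filter fun p =>
      (p.1 - 1, p.2) ∈ T ∧ (p.1, p.2 - 1) ∈ T ∧ (p.1 - 1, p.2 - 1) ∈ T) := by
  ext ⟨x, y⟩; simp [innerVert, and_assoc]

lemma mem_hdil (T : Finset (ℤ × ℤ)) (x y : ℤ) :
    (x, y) ∈ hdil T ↔ (x, y) ∈ T ∨ (x - 1, y) ∈ T := by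
  simp only [hdil, Finset.mem_union, Finset.mem_image, Prod.mk.injEq]
  constructor
  · rintro (h | ⟨⟨a, b⟩, hq, h1, h2⟩)
    · exact Or.inl h
    · right
      obtain ⟨rfl, rfl⟩ : a = x - 1 ∧ b = y := by omega
      exact hq
  · rintro (h | h)
    · exact Or.inl h
    · exact Or.inr ⟨(x - 1, y), h, by omega, rfl⟩

lemma mem_vdil (T : Finset (ℤ × ℤ)) (x y : ℤ) :
    (x, y) ∈ vdil T ↔ (x, y) ∈ T ∨ (x, y - 1) ∈ T := by
  simp only [vdil, Finset.mem_union, Finset.mem_image, Prod.mk.injEq]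
  constructor
  · rintro (h | ⟨⟨a, b⟩, hq, h1, h2⟩)
    · exact Or.inl h
    · right
      obtain ⟨rfl, rfl⟩ : a = x ∧ b = y - 1 := by omega
      exact hq
  · rintro (h | h)
    · exact Or.inl h
    · exact Or.inr ⟨(x, y - 1), h, rfl, by omega⟩

lemma card_hdil_add (A : Finset (ℤ × ℤ)) :
    (hdil A).card + (A.filter fun p => (p.1 - 1, p.2) ∈ A).card = 2 * A.card := by
  have h1 : A ∩ A.image (fun p => (p.1 + 1, p.2)) = A.filter fun p => (p.1 - 1, p.2) ∈ A := by
    ext ⟨x, y⟩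
    simp only [Finset.mem_inter, Finset.mem_image, Finset.mem_filter, Prod.mk.injEq]
    constructor
    · rintro ⟨h, ⟨a, b⟩, hq, hx, hy⟩
      obtain ⟨rfl, rfl⟩ : a = x - 1 ∧ b = y := by omega
      exact ⟨h, hq⟩
    · rintro ⟨h, hq⟩
      exact ⟨h, ⟨(x - 1, y), hq, by omega, rfl⟩⟩
  have h2 := Finset.card_union_add_card_inter A (A.image (fun p => (p.1 + 1, p.2)))
  rw [Finset.card_image_of_injective A hshiftInj, h1] at h2
  unfold hdil
  omega

lemma card_vdil_add (A : Finset (ℤ × ℤ)) :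
    (vdil A).card + (A.filter fun p => (p.1, p.2 - 1) ∈ A).card = 2 * A.card := by
  have h1 : A ∩ A.image (fun p => (p.1, p.2 + 1)) = A.filter fun p => (p.1, p.2 - 1) ∈ A := by
    ext ⟨x, y⟩
    simp only [Finset.mem_inter, Finset.mem_image, Finset.mem_filter, Prod.mk.injEq]
    constructor
    · rintro ⟨h, ⟨a, b⟩, hq, hx, hy⟩
      obtain ⟨rfl, rfl⟩ : a = x ∧ b = y - 1 := by omega
      exact ⟨h, hq⟩
    · rintro ⟨h, hq⟩
      exact ⟨h, ⟨(x, y - 1), hq, rfl, by omega⟩⟩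
  have h2 := Finset.card_union_add_card_inter A (A.image (fun p => (p.1, p.2 + 1)))
  rw [Finset.card_image_of_injective A vshiftInj, h1] at h2
  unfold vdil
  omega

lemma hdil_pair (T : Finset (ℤ × ℤ)) (hA : ∀ j, Adm1 1 (row T j)) (x y : ℤ) :
    ((x, y) ∈ hdil T ∧ (x - 1, y) ∈ hdil T) ↔ (x - 1, y) ∈ T := by
  rw [mem_hdil, mem_hdil]
  constructor
  · rintro ⟨h1 | h1, h2 | h2⟩
    · exact h2
    · by_contra hc
      rcases hA y (x - 1 - 1) x h2 h1 (by omega)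
          (fun c hc1 hc2 hcm => by
            have hcx : c = x - 1 := by omega
            rw [hcx] at hcm
            exact hc hcm) with h | h <;> omega
    · exact h1
    · exact h1
  · intro h
    exact ⟨Or.inr h, Or.inl h⟩

lemma vdil_pair (T : Finset (ℤ × ℤ)) (hA : ∀ i, Adm1 1 (col T i)) (x y : ℤ) :
    ((x, y) ∈ vdil T ∧ (x, y - 1) ∈ vdil T) ↔ (x, y - 1) ∈ T := by
  rw [mem_vdil, mem_vdil]
  constructor
  · rintro ⟨h1 | h1, h2 | h2⟩
    · exact h2
    · by_contra hc
      rcases hA x (y - 1 - 1) y h2 h1 (by omega)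
          (fun c hc1 hc2 hcm => by
            have hcx : c = y - 1 := by omega
            rw [hcx] at hcm
            exact hc hcm) with h | h <;> omega
    · exact h1
    · exact h1
  · intro h
    exact ⟨Or.inr h, Or.inl h⟩

lemma innerV_hdil_card (T : Finset (ℤ × ℤ)) (hA : ∀ j, Adm1 1 (row T j)) :
    (innerV (hdil T)).ncard = T.card := by
  have hset : innerV (hdil T) = (fun p : ℤ × ℤ => (p.1 + 1, p.2)) '' ↑T := by
    ext ⟨x, y⟩
    simp only [innerV, Set.mem_setOf_eq, Set.mem_image, Finset.mem_coe, Prod.mk.injEq]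
    rw [hdil_pair T hA x y]
    constructor
    · intro h
      exact ⟨(x - 1, y), h, by omega, rfl⟩
    · rintro ⟨⟨a, b⟩, ha, h1, h2⟩
      obtain ⟨rfl, rfl⟩ : a = x - 1 ∧ b = y := by omega
      exact ha
  rw [hset, Set.ncard_image_of_injective _ hshiftInj, Set.ncard_coe_finset]

lemma innerH_vdil_card (T : Finset (ℤ × ℤ)) (hA : ∀ i, Adm1 1 (col T i)) :
    (innerH (vdil T)).ncard = T.card := by
  have hset : innerH (vdil T) = (fun p : ℤ × ℤ => (p.1, p.2 + 1)) '' ↑T := by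
    ext ⟨x, y⟩
    simp only [innerH, Set.mem_setOf_eq, Set.mem_image, Finset.mem_coe, Prod.mk.injEq]
    rw [vdil_pair T hA x y]
    constructor
    · intro h
      exact ⟨(x, y - 1), h, rfl, by omega⟩
    · rintro ⟨⟨a, b⟩, ha, h1, h2⟩
      obtain ⟨rfl, rfl⟩ : a = x ∧ b = y - 1 := by omega
      exact ha
  rw [hset, Set.ncard_image_of_injective _ vshiftInj, Set.ncard_coe_finset]

lemma innerVert_hdil_card (T : Finset (ℤ × ℤ)) (hA : ∀ j, Adm1 1 (row T j)) :
    (innerVert (hdil T)).ncard = (innerH T).ncard := by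
  have hset : innerVert (hdil T) = (fun p : ℤ × ℤ => (p.1 + 1, p.2)) '' innerH T := by
    ext ⟨x, y⟩
    simp only [innerVert, Set.mem_setOf_eq, Set.mem_image, innerH, Prod.mk.injEq]
    constructor
    · rintro ⟨h1, h2, h3, h4⟩
      have e1 : (x - 1, y) ∈ T := (hdil_pair T hA x y).1 ⟨h1, h2⟩
      have e2 : (x - 1, y - 1) ∈ T := (hdil_pair T hA x (y - 1)).1 ⟨h3, h4⟩
      exact ⟨(x - 1, y), ⟨e1, e2⟩, by omega, rfl⟩
    · rintro ⟨⟨a, b⟩, ⟨ha1, ha2⟩, h1, h2⟩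
      have hax : a = x - 1 := by omega
      have hby : b = y := by omega
      rw [hax, hby] at ha1 ha2
      obtain ⟨g1, g2⟩ := (hdil_pair T hA x y).2 ha1
      obtain ⟨g3, g4⟩ := (hdil_pair T hA x (y - 1)).2 ha2
      exact ⟨g1, g2, g3, g4⟩
  rw [hset, Set.ncard_image_of_injective _ hshiftInj]

lemma innerVert_vdil_card (T : Finset (ℤ × ℤ)) (hA : ∀ i, Adm1 1 (col T i)) :
    (innerVert (vdil T)).ncard = (innerV T).ncard := by
  have hset : innerVert (vdil T) = (fun p : ℤ × ℤ => (p.1, p.2 + 1)) '' innerV T := by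
    ext ⟨x, y⟩
    simp only [innerVert, Set.mem_setOf_eq, Set.mem_image, innerV, Prod.mk.injEq]
    constructor
    · rintro ⟨h1, h2, h3, h4⟩
      have e1 : (x, y - 1) ∈ T := (vdil_pair T hA x y).1 ⟨h1, h3⟩
      have e2 : (x - 1, y - 1) ∈ T := (vdil_pair T hA (x - 1) y).1 ⟨h2, h4⟩
      exact ⟨(x, y - 1), ⟨e1, e2⟩, rfl, by omega⟩
    · rintro ⟨⟨a, b⟩, ⟨ha1, ha2⟩, h1, h2⟩
      have hax : a = x := by omega
      have hby : b = y - 1 := by omega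
      rw [hax, hby] at ha1 ha2
      obtain ⟨g1, g3⟩ := (vdil_pair T hA x y).2 ha1
      obtain ⟨g2, g4⟩ := (vdil_pair T hA (x - 1) y).2 ha2
      exact ⟨g1, g2, g3, g4⟩
  rw [hset, Set.ncard_image_of_injective _ vshiftInj]

lemma innerH_hdil_card (T : Finset (ℤ × ℤ)) (hM : ManifoldLike T) :
    (innerH (hdil T)).ncard + (innerVert T).ncard = 2 * (innerH T).ncard := by
  set A := T.filter fun p => (p.1, p.2 - 1) ∈ T with hAdef
  have hset : innerH (hdil T) = ↑(hdil A) := by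
    ext ⟨x, y⟩
    simp only [innerH, Set.mem_setOf_eq, Finset.mem_coe]
    rw [mem_hdil A]
    rw [mem_hdil, mem_hdil]
    simp only [hAdef, Finset.mem_filter]
    constructor
    · rintro ⟨h1 | h1, h2 | h2⟩
      · exact Or.inl ⟨h1, h2⟩
      · by_cases hb : (x, y - 1) ∈ T
        · exact Or.inl ⟨h1, hb⟩
        by_cases hc : (x - 1, y) ∈ T
        · exact Or.inr ⟨hc, h2⟩
        · exact absurd (Or.inl ⟨h2, h1, hc, hb⟩) (hM x y)
      · by_cases hb : (x, y) ∈ T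
        · exact Or.inl ⟨hb, h2⟩
        by_cases hc : (x - 1, y - 1) ∈ T
        · exact Or.inr ⟨h1, hc⟩
        · exact absurd (Or.inr ⟨h1, h2, hc, hb⟩) (hM x y)
      · exact Or.inr ⟨h1, h2⟩
    · rintro (⟨h1, h2⟩ | ⟨h1, h2⟩)
      · exact ⟨Or.inl h1, Or.inl h2⟩
      · exact ⟨Or.inr h1, Or.inr h2⟩
  have h2 : (A.filter fun p => (p.1 - 1, p.2) ∈ A)
      = T.filter fun p => (p.1 - 1, p.2) ∈ T ∧ (p.1, p.2 - 1) ∈ T ∧ (p.1 - 1, p.2 - 1) ∈ T := by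
    ext ⟨x, y⟩
    simp only [hAdef, Finset.mem_filter]
    tauto
  have h3 := card_hdil_add A
  rw [h2] at h3
  rw [hset, Set.ncard_coe_finset, innerH_eq_coe, Set.ncard_coe_finset,
    innerVert_eq_coe, Set.ncard_coe_finset]
  rw [← hAdef]
  omega

lemma innerV_vdil_card (T : Finset (ℤ × ℤ)) (hM : ManifoldLike T) :
    (innerV (vdil T)).ncard + (innerVert T).ncard = 2 * (innerV T).ncard := by
  set A := T.filter fun p => (p.1 - 1, p.2) ∈ T with hAdef
  have hset : innerV (vdil T) = ↑(vdil A) := by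
    ext ⟨x, y⟩
    simp only [innerV, Set.mem_setOf_eq, Finset.mem_coe]
    rw [mem_vdil A]
    rw [mem_vdil, mem_vdil]
    simp only [hAdef, Finset.mem_filter]
    constructor
    · rintro ⟨h1 | h1, h2 | h2⟩
      · exact Or.inl ⟨h1, h2⟩
      · by_cases hb : (x - 1, y) ∈ T
        · exact Or.inl ⟨h1, hb⟩
        by_cases hc : (x, y - 1) ∈ T
        · exact Or.inr ⟨hc, h2⟩
        · exact absurd (Or.inl ⟨h2, h1, hb, hc⟩) (hM x y)
      · by_cases hb : (x, y) ∈ T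
        · exact Or.inl ⟨hb, h2⟩
        by_cases hc : (x - 1, y - 1) ∈ T
        · exact Or.inr ⟨h1, hc⟩
        · exact absurd (Or.inr ⟨h2, h1, hc, hb⟩) (hM x y)
      · exact Or.inr ⟨h1, h2⟩
    · rintro (⟨h1, h2⟩ | ⟨h1, h2⟩)
      · exact ⟨Or.inl h1, Or.inl h2⟩
      · exact ⟨Or.inr h1, Or.inr h2⟩
  have h2 : (A.filter fun p => (p.1, p.2 - 1) ∈ A)
      = T.filter fun p => (p.1 - 1, p.2) ∈ T ∧ (p.1, p.2 - 1) ∈ T ∧ (p.1 - 1, p.2 - 1) ∈ T := by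
    ext ⟨x, y⟩
    simp only [hAdef, Finset.mem_filter]
    tauto
  have h3 := card_vdil_add A
  rw [h2] at h3
  rw [hset, Set.ncard_coe_finset, innerV_eq_coe, Set.ncard_coe_finset,
    innerVert_eq_coe, Set.ncard_coe_finset]
  rw [← hAdef]
  omega


lemma main_formula (k₁ k₂ : ℕ) (S : Finset (ℤ × ℤ)) (hS : A2 k₁ k₂ S) :
    ((dil S k₁ k₂).card : ℤ)
        = (k₁ + 1) * (k₂ + 1) * S.card - (k₁ + 1) * k₂ * (innerH S).ncard
            - (k₂ + 1) * k₁ * (innerV S).ncard + k₁ * k₂ * (innerVert S).ncard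
    ∧ ((innerH (dil S k₁ k₂)).ncard : ℤ)
        = (k₁ + 1) * ((k₂ : ℤ) * S.card - ((k₂ : ℤ) - 1) * (innerH S).ncard)
            - k₁ * ((k₂ : ℤ) * (innerV S).ncard - ((k₂ : ℤ) - 1) * (innerVert S).ncard)
    ∧ ((innerV (dil S k₁ k₂)).ncard : ℤ)
        = (k₂ + 1) * ((k₁ : ℤ) * S.card - ((k₁ : ℤ) - 1) * (innerV S).ncard)
            - k₂ * ((k₁ : ℤ) * (innerH S).ncard - ((k₁ : ℤ) - 1) * (innerVert S).ncard)
    ∧ ((innerVert (dil S k₁ k₂)).ncard : ℤ)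
        = k₁ * ((k₂ : ℤ) * S.card - ((k₂ : ℤ) - 1) * (innerH S).ncard)
            - ((k₁ : ℤ) - 1) * ((k₂ : ℤ) * (innerV S).ncard - ((k₂ : ℤ) - 1) * (innerVert S).ncard) := by
  induction k₁ with
  | zero =>
    induction k₂ with
    | zero =>
      have hd : dil S 0 0 = S := by simp [dil]
      rw [hd]
      push_cast
      refine ⟨by ring, by ring, by ring, by ring⟩
    | succ b ih =>
      rw [A2] at hS
      obtain ⟨hS', hM, hC⟩ := hS
      obtain ⟨i1, i2, i3, i4⟩ := ih hS'
      have hcol : ∀ i, Adm1 1 (col (dil S 0 b) i) := fun i => (hC i).1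
      have hd : dil S 0 (b + 1) = vdil (dil S 0 b) := by
        simp [dil, Function.iterate_succ_apply']
      set T := dil S 0 b with hT
      have s1 : ((vdil T).card : ℤ) + (innerH T).ncard = 2 * T.card := by
        have := card_vdil_add T
        rw [innerH_eq_coe, Set.ncard_coe_finset]
        exact_mod_cast this
      have s2 : ((innerH (vdil T)).ncard : ℤ) = T.card := by
        exact_mod_cast innerH_vdil_card T hcol
      have s3 : ((innerV (vdil T)).ncard : ℤ) + (innerVert T).ncard = 2 * (innerV T).ncard := by
        exact_mod_cast innerV_vdil_card T hM
      have s4 : ((innerVert (vdil T)).ncard : ℤ) = (innerV T).ncard := by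
        exact_mod_cast innerVert_vdil_card T hcol
      rw [hd]
      push_cast
      push_cast at i1 i2 i3 i4
      refine ⟨?_, ?_, ?_, ?_⟩
      · linear_combination s1 + 2 * i1 - i2
      · linear_combination s2 + i1
      · linear_combination s3 + 2 * i3 - i4
      · linear_combination s4 + i3
  | succ a ih =>
    rw [A2] at hS
    obtain ⟨hS', hM, hR⟩ := hS
    obtain ⟨i1, i2, i3, i4⟩ := ih hS'
    have hrow : ∀ j, Adm1 1 (row (dil S a k₂) j) := fun j => (hR j).1
    have hd : dil S (a + 1) k₂ = hdil (dil S a k₂) := by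
      simp [dil, Function.iterate_succ_apply']
    set T := dil S a k₂ with hT
    have s1 : ((hdil T).card : ℤ) + (innerV T).ncard = 2 * T.card := by
      have := card_hdil_add T
      rw [innerV_eq_coe, Set.ncard_coe_finset]
      exact_mod_cast this
    have s2 : ((innerV (hdil T)).ncard : ℤ) = T.card := by
      exact_mod_cast innerV_hdil_card T hrow
    have s3 : ((innerH (hdil T)).ncard : ℤ) + (innerVert T).ncard = 2 * (innerH T).ncard := by
      exact_mod_cast innerH_hdil_card T hM
    have s4 : ((innerVert (hdil T)).ncard : ℤ) = (innerH T).ncard := by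
      exact_mod_cast innerVert_hdil_card T hrow
    rw [hd]
    push_cast
    refine ⟨?_, ?_, ?_, ?_⟩
    · linear_combination s1 + 2 * i1 - i3
    · linear_combination s3 + 2 * i2 - i4
    · linear_combination s2 + i1
    · linear_combination s4 + i2


/-- Number of cells of the dilatation `Ω^e_{k₁,k₂}` of an `A²_{k₁,k₂}` domain
(stated additively):
`f₂ₖ = (k₁+1)(k₂+1)f₂ − (k₁+1)k₂ f₁ʰ⁰ − (k₂+1)k₁ f₁ᵛ⁰ + k₁k₂ f₀⁰`. -/
theorem stmt8 (k₁ k₂ : ℕ) (S : Finset (ℤ × ℤ)) (hS : A2 k₁ k₂ S) :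
    (dil S k₁ k₂).card + (k₁ + 1) * k₂ * (innerH S).ncard
        + (k₂ + 1) * k₁ * (innerV S).ncard
      = (k₁ + 1) * (k₂ + 1) * S.card + k₁ * k₂ * (innerVert S).ncard := by
  have h := (main_formula k₁ k₂ S hS).1
  zify
  linear_combination h
end
end

section
/- Let Ω ∈ A²_{m−1,n−1} be a planar cell domain with counts f₂, f₁^{h,0}, f₁^{v,0}, f₀⁰. The number N of axis-aligned (m+1)×(n+1) rectangles of grid cells (minimal supports of bidegree-(m,n) tensor-product B-splines with simple knots) that share at least one cell with Ω equals (m+1)(n+1)f₂ − (m+1)n·f₁^{h,0} − (n+1)m·f₁^{v,0} + mn·f₀⁰. -/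
open Set

noncomputable section

namespace Aux

def dil1 (k : ℕ) (A : Set ℤ) : Set ℤ := {x | ∃ a ∈ A, a ≤ x ∧ x ≤ a + k}

def E1 (A : Set ℤ) : Set ℤ := {a | a ∈ A ∧ a - 1 ∈ A}

def Gap (k : ℕ) (A : Set ℤ) : Prop :=
  ∀ a ∈ A, ∀ b ∈ A, a < b → (∀ c : ℤ, a < c → c < b → c ∉ A) → b = a + 1 ∨ (k : ℤ) ≤ b - a - 1

lemma mem_dil1 {k : ℕ} {A : Set ℤ} {x : ℤ} :
    x ∈ dil1 k A ↔ ∃ a ∈ A, a ≤ x ∧ x ≤ a + k := Iff.rfl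

lemma mem_E1 {A : Set ℤ} {a : ℤ} : a ∈ E1 A ↔ a ∈ A ∧ a - 1 ∈ A := Iff.rfl

lemma dil1_union (k : ℕ) (A B : Set ℤ) : dil1 k (A ∪ B) = dil1 k A ∪ dil1 k B := by
  ext x
  simp only [mem_dil1, Set.mem_union]
  constructor
  · rintro ⟨a, ha | ha, h1, h2⟩
    · exact Or.inl ⟨a, ha, h1, h2⟩
    · exact Or.inr ⟨a, ha, h1, h2⟩
  · rintro (⟨a, ha, h1, h2⟩ | ⟨a, ha, h1, h2⟩)
    · exact ⟨a, Or.inl ha, h1, h2⟩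
    · exact ⟨a, Or.inr ha, h1, h2⟩

lemma dil1_coe (k : ℕ) (A : Finset ℤ) :
    dil1 k ↑A = ↑(A.biUnion fun a => Finset.Icc a (a + (k : ℤ))) := by
  ext x
  simp only [mem_dil1, Finset.coe_biUnion, Set.mem_iUnion, Finset.coe_Icc, Set.mem_Icc,
    Finset.mem_coe]
  constructor
  · rintro ⟨a, ha, h1, h2⟩; exact ⟨a, ha, h1, h2⟩
  · rintro ⟨a, ha, h1, h2⟩; exact ⟨a, ha, h1, h2⟩

lemma dil1_finite (k : ℕ) {A : Set ℤ} (hA : A.Finite) : (dil1 k A).Finite := by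
  obtain ⟨F, rfl⟩ : ∃ F : Finset ℤ, ↑F = A := ⟨hA.toFinset, hA.coe_toFinset⟩
  rw [dil1_coe]; exact Finset.finite_toSet _

lemma E1_subset (A : Set ℤ) : E1 A ⊆ A := fun a ha => ha.1

lemma subset_dil1 (k : ℕ) (A : Set ℤ) : A ⊆ dil1 k A := by
  intro a ha; exact ⟨a, ha, le_refl _, by omega⟩

/-- The main 1D counting lemma. -/
lemma main1 (k : ℕ) (A : Finset ℤ) (hg : Gap k ↑A) :
    (dil1 k ↑A).ncard + k * (E1 ↑A).ncard = (k + 1) * A.card := by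
  induction A using Finset.strongInduction with
  | _ A ih =>
  rcases A.eq_empty_or_nonempty with rfl | hne
  · simp [dil1, E1]
  set M := A.max' hne with hM
  have hMA : M ∈ A := A.max'_mem hne
  set A' := A.erase M with hA'
  have hss : A' ⊂ A := Finset.erase_ssubset hMA
  have hcard : A.card = A'.card + 1 := by
    rw [hA', Finset.card_erase_of_mem hMA]
    have : 0 < A.card := Finset.card_pos.2 hne
    omega
  have hlt : ∀ x ∈ A', x < M := by
    intro x hx
    have h1 := A.le_max' x (Finset.mem_of_mem_erase hx)
    have h2 := Finset.ne_of_mem_erase hx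
    omega
  have hgap' : Gap k ↑A' := by
    intro a ha b hb hab hcons
    refine hg a (Finset.mem_coe.2 (Finset.mem_of_mem_erase ha))
      b (Finset.mem_coe.2 (Finset.mem_of_mem_erase hb)) hab ?_
    intro c hc1 hc2 hc
    have hcb : c < M := lt_trans hc2 (hlt b (Finset.mem_coe.1 hb))
    exact hcons c hc1 hc2 (Finset.mem_coe.2 (Finset.mem_erase.2 ⟨by omega, Finset.mem_coe.1 hc⟩))
  have IH := ih A' hss hgap'
  rcases A'.eq_empty_or_nonempty with he | hne'
  · -- A = {M}
    have hAs : (A : Set ℤ) = {M} := by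
      ext x
      simp only [Finset.mem_coe, Set.mem_singleton_iff]
      constructor
      · intro hx
        by_contra hxx
        exact (Finset.notMem_empty x) (he ▸ Finset.mem_erase.2 ⟨hxx, hx⟩)
      · rintro rfl; exact hMA
    have h1 : dil1 k (A : Set ℤ) = ↑(Finset.Icc M (M + (k:ℤ))) := by
      rw [hAs]
      ext x
      simp only [mem_dil1, Set.mem_singleton_iff, Finset.coe_Icc, Set.mem_Icc]
      constructor
      · rintro ⟨a, rfl, h1, h2⟩; exact ⟨h1, h2⟩
      · rintro ⟨h1, h2⟩; exact ⟨M, rfl, h1, h2⟩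
    have h2 : E1 (A : Set ℤ) = (∅ : Set ℤ) := by
      rw [hAs]
      ext a
      simp only [mem_E1, Set.mem_singleton_iff, Set.mem_empty_iff_false, iff_false]
      rintro ⟨rfl, h⟩; omega
    rw [h1, h2, Set.ncard_coe_finset, Int.card_Icc, hcard, he]
    simp; omega
  · set b := A'.max' hne' with hb
    have hbA' : b ∈ A' := A'.max'_mem hne'
    have hbA : b ∈ A := Finset.mem_of_mem_erase hbA'
    have hbM : b < M := hlt b hbA'
    have hble : ∀ x ∈ A', x ≤ b := fun x hx => A'.le_max' x hx
    have hnothing : ∀ c : ℤ, b < c → c < M → c ∉ (A : Set ℤ) := by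
      intro c h1 h2 hc
      have hc' : c ∈ A' := Finset.mem_erase.2 ⟨by omega, Finset.mem_coe.1 hc⟩
      have := hble c hc'; omega
    have hgapbM := hg b (Finset.mem_coe.2 hbA) M (Finset.mem_coe.2 hMA) hbM hnothing
    have hfin' : (dil1 k (↑A' : Set ℤ)).Finite := dil1_finite k (A'.finite_toSet)
    have hfinE : (E1 (↑A' : Set ℤ)).Finite := (A'.finite_toSet).subset (E1_subset _)
    have hmemA : ∀ x : ℤ, x ∈ (A : Set ℤ) ↔ x ∈ (A' : Set ℤ) ∨ x = M := by
      intro x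
      simp only [Finset.mem_coe, hA', Finset.mem_erase]
      constructor
      · intro hx
        by_cases h : x = M
        · exact Or.inr h
        · exact Or.inl ⟨h, hx⟩
      · rintro (⟨_, hx⟩ | rfl) <;> [exact hx; exact hMA]
    by_cases hcase : M = b + 1
    · -- adjacent case
      have hd : dil1 k (A : Set ℤ) = insert ((M : ℤ) + k) (dil1 k ↑A') := by
        ext x
        simp only [Set.mem_insert_iff, mem_dil1]
        constructor
        · rintro ⟨a, ha, h1, h2⟩
          rcases (hmemA a).1 ha with ha' | haM
          · exact Or.inr ⟨a, ha', h1, h2⟩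
          · subst haM
            by_cases hx : x = M + k
            · exact Or.inl hx
            · exact Or.inr ⟨b, Finset.mem_coe.2 hbA', by omega, by omega⟩
        · rintro (rfl | ⟨a, ha, h1, h2⟩)
          · exact ⟨M, (hmemA M).2 (Or.inr rfl), by omega, by omega⟩
          · exact ⟨a, (hmemA a).2 (Or.inl ha), h1, h2⟩
      have hnotmem : ((M : ℤ) + k) ∉ dil1 k (↑A' : Set ℤ) := by
        rintro ⟨a, ha, h1, h2⟩
        have := hble a (Finset.mem_coe.1 ha); omega
      have hE : E1 (A : Set ℤ) = insert M (E1 ↑A') := by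
        ext a
        simp only [mem_E1, Set.mem_insert_iff]
        constructor
        · rintro ⟨h1, h2⟩
          rcases (hmemA a).1 h1 with h1' | rfl
          · rcases (hmemA (a-1)).1 h2 with h2' | hM'
            · exact Or.inr ⟨h1', h2'⟩
            · have := hble a (Finset.mem_coe.1 h1'); omega
          · exact Or.inl rfl
        · rintro (rfl | ⟨h1, h2⟩)
          · exact ⟨(hmemA M).2 (Or.inr rfl), (hmemA (M-1)).2 (Or.inl (by
              rw [hcase]; simpa using Finset.mem_coe.2 hbA'))⟩
          · exact ⟨(hmemA a).2 (Or.inl h1), (hmemA (a-1)).2 (Or.inl h2)⟩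
      have hMnotE : M ∉ E1 (↑A' : Set ℤ) := fun h => absurd (hlt M (Finset.mem_coe.1 h.1)) (lt_irrefl M)
      rw [hd, hE, Set.ncard_insert_of_notMem hnotmem hfin',
        Set.ncard_insert_of_notMem hMnotE hfinE, hcard]
      rw [Nat.mul_add, Nat.mul_add, Nat.mul_one, Nat.mul_one, ← IH]
      ring
    · -- separated case : M ≥ b + 2 and k ≤ M - b - 1
      have hk : (k : ℤ) ≤ M - b - 1 := by rcases hgapbM with h | h; omega; exact h
      have hM2 : b + 2 ≤ M := by omega
      have hd : dil1 k (A : Set ℤ) = dil1 k ↑A' ∪ ↑(Finset.Icc M (M + (k:ℤ))) := by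
        ext x
        simp only [Set.mem_union, mem_dil1, Finset.coe_Icc, Set.mem_Icc]
        constructor
        · rintro ⟨a, ha, h1, h2⟩
          rcases (hmemA a).1 ha with ha' | rfl
          · exact Or.inl ⟨a, ha', h1, h2⟩
          · exact Or.inr ⟨h1, h2⟩
        · rintro (⟨a, ha, h1, h2⟩ | ⟨h1, h2⟩)
          · exact ⟨a, (hmemA a).2 (Or.inl ha), h1, h2⟩
          · exact ⟨M, (hmemA M).2 (Or.inr rfl), h1, h2⟩
      have hdisj : Disjoint (dil1 k (↑A' : Set ℤ)) ↑(Finset.Icc M (M + (k:ℤ))) := by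
        rw [Set.disjoint_left]
        rintro x ⟨a, ha, h1, h2⟩ hx
        simp only [Finset.coe_Icc, Set.mem_Icc] at hx
        have := hble a (Finset.mem_coe.1 ha); omega
      have hE : E1 (A : Set ℤ) = E1 ↑A' := by
        ext a
        simp only [mem_E1]
        constructor
        · rintro ⟨h1, h2⟩
          rcases (hmemA a).1 h1 with h1' | haM
          · rcases (hmemA (a-1)).1 h2 with h2' | hM'
            · exact ⟨h1', h2'⟩
            · have := hble a (Finset.mem_coe.1 h1'); omega
          · exfalso
            rcases (hmemA (a-1)).1 h2 with h2' | hM'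
            · have := hble (a-1) (Finset.mem_coe.1 h2'); omega
            · omega
        · rintro ⟨h1, h2⟩
          exact ⟨(hmemA a).2 (Or.inl h1), (hmemA (a-1)).2 (Or.inl h2)⟩
      rw [hd, hE, Set.ncard_union_eq hdisj hfin' (Finset.finite_toSet _),
        Set.ncard_coe_finset, Int.card_Icc]
      have hIcc : ((M:ℤ) + k + 1 - M).toNat = k + 1 := by omega
      rw [hIcc, hcard, Nat.mul_add, Nat.mul_one, ← IH]
      ring

/-- Set version of the main 1D lemma. -/
lemma main1' (k : ℕ) (A : Set ℤ) (hA : A.Finite) (hg : Gap k A) :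
    (dil1 k A).ncard + k * (E1 A).ncard = (k + 1) * A.ncard := by
  obtain ⟨F, rfl⟩ : ∃ F : Finset ℤ, ↑F = A := ⟨hA.toFinset, hA.coe_toFinset⟩
  rw [Set.ncard_coe_finset]
  exact main1 k F hg




/-- Local manifold condition for a pair of adjacent columns. -/
def MLpair (A B : Set ℤ) : Prop :=
  ∀ j : ℤ, (j - 1 ∈ B → j ∈ A → (j ∈ B ∨ j - 1 ∈ A)) ∧
    (j - 1 ∈ A → j ∈ B → (j - 1 ∈ B ∨ j ∈ A))

lemma MLpair.symm {A B : Set ℤ} (h : MLpair A B) : MLpair B A := by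
  intro j
  exact ⟨fun h1 h2 => ((h j).2 h1 h2).symm, fun h1 h2 => ((h j).1 h1 h2).symm⟩

/-- Deriving the gap condition from the chain of offset admissibilities. -/
lemma gap_of_chain (k : ℕ) (A : Set ℤ)
    (h : ∀ t : ℕ, t + 2 ≤ k → Adm1 1 (dil1 t A)) : Gap k A := by
  intro a ha b hb hab hcons
  by_cases htriv : b = a + 1
  · exact Or.inl htriv
  right
  by_contra hcon
  push_neg at hcon
  have hg1 : (1:ℤ) ≤ b - a - 1 := by omega
  set t : ℕ := (b - a - 2).toNat with ht
  have htz : (t : ℤ) = b - a - 2 := by omega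
  have ht2 : t + 2 ≤ k := by omega
  have hadm := h t ht2
  have hat : a + t ∈ dil1 t A := ⟨a, ha, by omega, by omega⟩
  have hbt : b ∈ dil1 t A := ⟨b, hb, le_refl _, by omega⟩
  have hbetw : ∀ c : ℤ, a + t < c → c < b → c ∉ dil1 t A := by
    rintro c h1 h2 ⟨a', ha', h3, h4⟩
    have : a < a' := by omega
    have : a' < b := by omega
    exact hcons a' ‹a < a'› ‹a' < b› ha'
  rcases hadm (a + t) b hat hbt (by omega) hbetw with h' | h' <;> omega

/-- If two points of `A ∪ B` are within distance `n` and `A ∪ B` has gaps `≥ n`,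
the whole interval between them lies in `A ∪ B`. -/
lemma interval_subset {n : ℕ} {U : Set ℤ} (hg : Gap n U) {b a : ℤ}
    (hb : b ∈ U) (ha : a ∈ U) (hba : b ≤ a) (hd : a - b ≤ (n : ℤ)) :
    ∀ c : ℤ, b ≤ c → c ≤ a → c ∈ U := by
  intro c hbc hca
  by_contra hc
  have hbc' : b < c := lt_of_le_of_ne hbc (by rintro rfl; exact hc hb)
  have hca' : c < a := lt_of_le_of_ne hca (by rintro rfl; exact hc ha)
  obtain ⟨u, ⟨huU, hub, huc⟩, humax⟩ :=
    Int.exists_greatest_of_bdd (P := fun x => x ∈ U ∧ b ≤ x ∧ x < c)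
      ⟨c, fun z hz => le_of_lt hz.2.2⟩ ⟨b, hb, le_refl _, hbc'⟩
  obtain ⟨v, ⟨hvU, hcv, hva⟩, hvmin⟩ :=
    Int.exists_least_of_bdd (P := fun x => x ∈ U ∧ c < x ∧ x ≤ a)
      ⟨c, fun z hz => le_of_lt hz.2.1⟩ ⟨a, ha, hca', le_refl _⟩
  have huv : u < v := by omega
  have hnothing : ∀ x : ℤ, u < x → x < v → x ∉ U := by
    intro x h1 h2 hx
    rcases lt_trichotomy x c with h | rfl | h
    · have : b ≤ x := by omega
      exact absurd (humax x ⟨hx, this, h⟩) (by omega)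
    · exact hc hx
    · have : x ≤ a := by omega
      exact absurd (hvmin x ⟨hx, h, this⟩) (by omega)
  rcases hg u huU v hvU huv hnothing with h | h <;> omega

/-- Crossing lemma: between a point of `B` and a later point of `A`, within `A ∪ B`,
there is a point of `A ∩ B`. -/
lemma exists_mem_inter {A B : Set ℤ} (hML : MLpair A B) {b a : ℤ}
    (hb : b ∈ B) (ha : a ∈ A) (hba : b ≤ a)
    (hsub : ∀ c : ℤ, b ≤ c → c ≤ a → c ∈ A ∪ B) :
    ∃ c : ℤ, b ≤ c ∧ c ≤ a ∧ c ∈ A ∩ B := by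
  obtain ⟨c, ⟨hcA, hbc, hca⟩, hcmin⟩ :=
    Int.exists_least_of_bdd (P := fun x => x ∈ A ∧ b ≤ x ∧ x ≤ a)
      ⟨b, fun z hz => hz.2.1⟩ ⟨a, ha, hba, le_refl _⟩
  by_cases hcb : c = b
  · exact ⟨c, le_of_eq hcb.symm, hca, hcA, hcb ▸ hb⟩
  have hbc' : b < c := lt_of_le_of_ne hbc (Ne.symm hcb)
  have hc1 : c - 1 ∉ A := by
    intro h
    exact absurd (hcmin (c-1) ⟨h, by omega, by omega⟩) (by omega)
  have hc1B : c - 1 ∈ B := by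
    rcases hsub (c-1) (by omega) (by omega) with h | h
    · exact absurd h hc1
    · exact h
  rcases (hML c).1 hc1B hcA with h | h
  · exact ⟨c, by omega, hca, hcA, h⟩
  · exact absurd h hc1

/-- Dilation commutes with intersection of adjacent columns. -/
lemma dil1_inter {n : ℕ} {A B : Set ℤ} (hML : MLpair A B) (hg : Gap n (A ∪ B)) :
    dil1 n A ∩ dil1 n B = dil1 n (A ∩ B) := by
  ext x
  constructor
  · rintro ⟨⟨p, hpA, hp1, hp2⟩, ⟨q, hqB, hq1, hq2⟩⟩
    rcases le_total q p with hqp | hpq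
    · have hsub := interval_subset hg (Or.inr hqB : q ∈ A ∪ B) (Or.inl hpA) hqp (by omega)
      obtain ⟨c, h1, h2, hcA, hcB⟩ := exists_mem_inter hML hqB hpA hqp hsub
      exact ⟨c, ⟨hcA, hcB⟩, by omega, by omega⟩
    · have hsub := interval_subset hg (Or.inl hpA : p ∈ A ∪ B) (Or.inr hqB) hpq (by omega)
      have hsub' : ∀ c : ℤ, p ≤ c → c ≤ q → c ∈ B ∪ A := by
        intro c h1 h2; exact (hsub c h1 h2).symm
      obtain ⟨c, h1, h2, hcB, hcA⟩ := exists_mem_inter hML.symm hpA hqB hpq hsub'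
      exact ⟨c, ⟨hcA, hcB⟩, by omega, by omega⟩
  · rintro ⟨c, ⟨hcA, hcB⟩, h1, h2⟩
    exact ⟨⟨c, hcA, h1, h2⟩, ⟨c, hcB, h1, h2⟩⟩

/-- The intersection of adjacent admissible columns has gaps `≥ n`. -/
lemma gap_inter {n : ℕ} {A B : Set ℤ} (hML : MLpair A B)
    (hgA : Gap n A) (hgB : Gap n B) (hgU : Gap n (A ∪ B)) : Gap n (A ∩ B) := by
  intro u hu v hv huv hcons
  by_cases htriv : v = u + 1
  · exact Or.inl htriv
  right
  by_contra hcon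
  push_neg at hcon
  have hvu : v - u ≤ (n : ℤ) := by omega
  have hsub : ∀ c : ℤ, u ≤ c → c ≤ v → c ∈ A ∪ B :=
    interval_subset hgU (Or.inl hu.1) (Or.inl hv.1) (le_of_lt huv) hvu
  -- show A ∩ (u,v) = ∅ or B ∩ (u,v) = ∅
  have key : (∀ c : ℤ, u < c → c < v → c ∉ A) ∨ (∀ c : ℤ, u < c → c < v → c ∉ B) := by
    by_contra hk
    push_neg at hk
    obtain ⟨⟨x, hx1, hx2, hxA⟩, ⟨y, hy1, hy2, hyB⟩⟩ := hk
    -- x ∈ A, not in B (else contradiction with hcons); similarly y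
    have hxB : x ∉ B := fun h => hcons x hx1 hx2 ⟨hxA, h⟩
    have hyA : y ∉ A := fun h => hcons y hy1 hy2 ⟨h, hyB⟩
    -- find a crossing from B-point y to A: within [min,max] ⊆ A ∪ B
    rcases le_total y x with hyx | hxy
    · obtain ⟨c, h1, h2, hcA, hcB⟩ := exists_mem_inter hML hyB hxA hyx
        (fun c hc1 hc2 => hsub c (by omega) (by omega))
      exact hcons c (by omega) (by omega) ⟨hcA, hcB⟩
    · obtain ⟨c, h1, h2, hcB, hcA⟩ := exists_mem_inter hML.symm hxA hyB hxy
        (fun c hc1 hc2 => (hsub c (by omega) (by omega)).symm)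
      exact hcons c (by omega) (by omega) ⟨hcA, hcB⟩
  rcases key with h | h
  · rcases hgA u hu.1 v hv.1 huv h with h' | h' <;> omega
  · rcases hgB u hu.2 v hv.2 huv h with h' | h' <;> omega



lemma mem_vdil {U : Finset (ℤ × ℤ)} {p : ℤ × ℤ} :
    p ∈ vdil U ↔ p ∈ U ∨ (p.1, p.2 - 1) ∈ U := by
  simp only [vdil, Finset.mem_union, Finset.mem_image]
  constructor
  · rintro (h | ⟨q, hq, hqp⟩)
    · exact Or.inl h
    · right
      have h1 : q.1 = p.1 := by rw [← hqp]
      have h2 : q.2 = p.2 - 1 := by rw [← hqp]; omega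
      rw [← h1, ← h2]; exact hq
  · rintro (h | h)
    · exact Or.inl h
    · exact Or.inr ⟨(p.1, p.2 - 1), h, by simp⟩

lemma mem_hdil {U : Finset (ℤ × ℤ)} {p : ℤ × ℤ} :
    p ∈ hdil U ↔ p ∈ U ∨ (p.1 - 1, p.2) ∈ U := by
  simp only [hdil, Finset.mem_union, Finset.mem_image]
  constructor
  · rintro (h | ⟨q, hq, hqp⟩)
    · exact Or.inl h
    · right
      have h1 : q.1 = p.1 - 1 := by rw [← hqp]; omega
      have h2 : q.2 = p.2 := by rw [← hqp]
      rw [← h1, ← h2]; exact hq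
  · rintro (h | h)
    · exact Or.inl h
    · exact Or.inr ⟨(p.1 - 1, p.2), h, by simp⟩

lemma mem_vdil_iter {t : ℕ} {U : Finset (ℤ × ℤ)} {p : ℤ × ℤ} :
    p ∈ vdil^[t] U ↔ ∃ s : ℤ, 0 ≤ s ∧ s ≤ t ∧ (p.1, p.2 - s) ∈ U := by
  induction t generalizing p with
  | zero =>
    simp only [Function.iterate_zero, id_eq]
    constructor
    · intro h; exact ⟨0, le_refl _, by omega, by simpa using h⟩
    · rintro ⟨s, h1, h2, h3⟩
      have : s = 0 := by omega
      subst this; simpa using h3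
  | succ t ih =>
    rw [Function.iterate_succ_apply', mem_vdil, ih, ih]
    constructor
    · rintro (⟨s, h1, h2, h3⟩ | ⟨s, h1, h2, h3⟩)
      · exact ⟨s, h1, by omega, h3⟩
      · refine ⟨s + 1, by omega, by omega, ?_⟩
        have : p.2 - 1 - s = p.2 - (s + 1) := by omega
        rwa [this] at h3
    · rintro ⟨s, h1, h2, h3⟩
      by_cases hs : s ≤ t
      · exact Or.inl ⟨s, h1, by omega, h3⟩
      · refine Or.inr ⟨s - 1, by omega, by omega, ?_⟩
        have : p.2 - 1 - (s - 1) = p.2 - s := by omega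
        rwa [this]

lemma mem_hdil_iter {t : ℕ} {U : Finset (ℤ × ℤ)} {p : ℤ × ℤ} :
    p ∈ hdil^[t] U ↔ ∃ s : ℤ, 0 ≤ s ∧ s ≤ t ∧ (p.1 - s, p.2) ∈ U := by
  induction t generalizing p with
  | zero =>
    simp only [Function.iterate_zero, id_eq]
    constructor
    · intro h; exact ⟨0, le_refl _, by omega, by simpa using h⟩
    · rintro ⟨s, h1, h2, h3⟩
      have : s = 0 := by omega
      subst this; simpa using h3
  | succ t ih =>
    rw [Function.iterate_succ_apply', mem_hdil, ih, ih]
    constructor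
    · rintro (⟨s, h1, h2, h3⟩ | ⟨s, h1, h2, h3⟩)
      · exact ⟨s, h1, by omega, h3⟩
      · refine ⟨s + 1, by omega, by omega, ?_⟩
        have : p.1 - 1 - s = p.1 - (s + 1) := by omega
        rwa [this] at h3
    · rintro ⟨s, h1, h2, h3⟩
      by_cases hs : s ≤ t
      · exact Or.inl ⟨s, h1, by omega, h3⟩
      · refine Or.inr ⟨s - 1, by omega, by omega, ?_⟩
        have : p.1 - 1 - (s - 1) = p.1 - s := by omega
        rwa [this]

lemma col_vdil_iter (t : ℕ) (U : Finset (ℤ × ℤ)) (i : ℤ) :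
    col (vdil^[t] U) i = dil1 t (col U i) := by
  ext j
  simp only [col, Set.mem_setOf_eq, mem_vdil_iter, mem_dil1]
  constructor
  · rintro ⟨s, h1, h2, h3⟩; exact ⟨j - s, h3, by omega, by omega⟩
  · rintro ⟨a, ha, h1, h2⟩
    exact ⟨j - a, by omega, by omega, by simpa [show j - (j - a) = a by omega] using ha⟩

lemma row_hdil_iter (t : ℕ) (U : Finset (ℤ × ℤ)) (j : ℤ) :
    row (hdil^[t] U) j = dil1 t (row U j) := by
  ext i
  simp only [row, Set.mem_setOf_eq, mem_hdil_iter, mem_dil1]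
  constructor
  · rintro ⟨s, h1, h2, h3⟩; exact ⟨i - s, h3, by omega, by omega⟩
  · rintro ⟨a, ha, h1, h2⟩
    exact ⟨i - a, by omega, by omega, by simpa [show i - (i - a) = a by omega] using ha⟩

lemma row_vdil (U : Finset (ℤ × ℤ)) (j : ℤ) :
    row (vdil U) j = row U j ∪ row U (j - 1) := by
  ext i
  simp only [row, Set.mem_setOf_eq, mem_vdil, Set.mem_union]

lemma col_finite (U : Finset (ℤ × ℤ)) (i : ℤ) : (col U i).Finite := by
  apply (U.finite_toSet.image Prod.snd).subset
  intro j hj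
  exact ⟨(i, j), hj, rfl⟩

lemma row_finite (U : Finset (ℤ × ℤ)) (j : ℤ) : (row U j).Finite := by
  apply (U.finite_toSet.image Prod.fst).subset
  intro i hi
  exact ⟨(i, j), hi, rfl⟩

lemma ncard_col (U : Finset (ℤ × ℤ)) (i : ℤ) :
    (col U i).ncard = (U.filter (fun p => p.1 = i)).card := by
  rw [← Set.ncard_coe_finset (U.filter (fun p => p.1 = i))]
  have : col U i = Prod.snd '' ((U.filter (fun p => p.1 = i) : Finset (ℤ × ℤ)) : Set (ℤ × ℤ)) := by
    ext j
    simp only [col, Set.mem_setOf_eq, Set.mem_image, Finset.coe_filter, Set.mem_setOf_eq,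
      Finset.mem_coe]
    constructor
    · intro h; exact ⟨(i, j), ⟨h, rfl⟩, rfl⟩
    · rintro ⟨⟨a, b⟩, ⟨h1, h2⟩, rfl⟩
      simp only at h2
      subst h2; exact h1
  rw [this]
  have hinj : Set.InjOn Prod.snd ((U.filter (fun p : ℤ × ℤ => p.1 = i) : Finset (ℤ × ℤ)) : Set (ℤ × ℤ)) := by
    rintro ⟨a, b⟩ h1 ⟨c, d⟩ h2 h3
    simp only [Finset.coe_filter, Set.mem_setOf_eq] at h1 h2
    simp only at h3
    simp [h1.2, h2.2, h3]
  rw [Set.ncard_image_of_injOn hinj]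

lemma ncard_row (U : Finset (ℤ × ℤ)) (j : ℤ) :
    (row U j).ncard = (U.filter (fun p => p.2 = j)).card := by
  rw [← Set.ncard_coe_finset (U.filter (fun p => p.2 = j))]
  have : row U j = Prod.fst '' ((U.filter (fun p => p.2 = j) : Finset (ℤ × ℤ)) : Set (ℤ × ℤ)) := by
    ext i
    simp only [row, Set.mem_setOf_eq, Set.mem_image, Finset.coe_filter, Set.mem_setOf_eq,
      Finset.mem_coe]
    constructor
    · intro h; exact ⟨(i, j), ⟨h, rfl⟩, rfl⟩
    · rintro ⟨⟨a, b⟩, ⟨h1, h2⟩, rfl⟩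
      simp only at h2
      subst h2; exact h1
  rw [this]
  have hinj : Set.InjOn Prod.fst ((U.filter (fun p : ℤ × ℤ => p.2 = j) : Finset (ℤ × ℤ)) : Set (ℤ × ℤ)) := by
    rintro ⟨a, b⟩ h1 ⟨c, d⟩ h2 h3
    simp only [Finset.coe_filter, Set.mem_setOf_eq] at h1 h2
    simp only at h3
    simp [h1.2, h2.2, h3]
  rw [Set.ncard_image_of_injOn hinj]

lemma card_eq_sum_col (U : Finset (ℤ × ℤ)) (I : Finset ℤ) (hI : ∀ p ∈ U, p.1 ∈ I) :
    U.card = ∑ i ∈ I, (col U i).ncard := by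
  rw [Finset.card_eq_sum_card_fiberwise hI]
  exact Finset.sum_congr rfl fun i _ => (ncard_col U i).symm

lemma card_eq_sum_row (U : Finset (ℤ × ℤ)) (J : Finset ℤ) (hJ : ∀ p ∈ U, p.2 ∈ J) :
    U.card = ∑ j ∈ J, (row U j).ncard := by
  rw [Finset.card_eq_sum_card_fiberwise hJ]
  exact Finset.sum_congr rfl fun j _ => (ncard_row U j).symm

-- A2 extraction
lemma A2_succ1 (k₁ k₂ : ℕ) (S : Finset (ℤ × ℤ)) :
    A2 (k₁ + 1) k₂ S = (A2 k₁ k₂ S ∧ A210 (dil S k₁ k₂)) := by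
  rw [A2]

lemma A2_succ2 (k₂ : ℕ) (S : Finset (ℤ × ℤ)) :
    A2 0 (k₂ + 1) S = (A2 0 k₂ S ∧ A201 (dil S 0 k₂)) := by
  rw [A2]

lemma A2_zero (S : Finset (ℤ × ℤ)) : A2 0 0 S = ManifoldLike S := by rw [A2]

lemma A2_mono1 {k₁ k₂ : ℕ} {S : Finset (ℤ × ℤ)} (h : A2 (k₁ + 1) k₂ S) : A2 k₁ k₂ S :=
  ((A2_succ1 k₁ k₂ S) ▸ h).1

lemma A2_strip1 {k₁ k₂ : ℕ} {S : Finset (ℤ × ℤ)} (h : A2 k₁ k₂ S) : A2 0 k₂ S := by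
  induction k₁ with
  | zero => exact h
  | succ k ih => exact ih (A2_mono1 h)

lemma A2_manifold {k₁ k₂ : ℕ} {S : Finset (ℤ × ℤ)} (h : A2 k₁ k₂ S) : ManifoldLike S := by
  have h0 := A2_strip1 h
  clear h
  induction k₂ with
  | zero => exact (A2_zero S) ▸ h0
  | succ k ih => exact ih ((A2_succ2 k S ▸ h0).1)

lemma A2_210 {k₁ k₂ : ℕ} {S : Finset (ℤ × ℤ)} (h : A2 k₁ k₂ S) (t : ℕ) (ht : t < k₁) :
    A210 (dil S t k₂) := by
  induction k₁ with
  | zero => omega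
  | succ k ih =>
    by_cases hc : t = k
    · subst hc; exact (A2_succ1 t k₂ S ▸ h).2
    · exact ih (A2_mono1 h) (by omega)

lemma A2_201 {k₂ : ℕ} {S : Finset (ℤ × ℤ)} (h : A2 0 k₂ S) (t : ℕ) (ht : t < k₂) :
    A201 (dil S 0 t) := by
  induction k₂ with
  | zero => omega
  | succ k ih =>
    by_cases hc : t = k
    · subst hc; exact (A2_succ2 t S ▸ h).2
    · exact ih ((A2_succ2 k S ▸ h).1) (by omega)

end Aux

/-- The number of `(m+1) × (n+1)` rectangles of grid cells (minimal B-spline supports,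
indexed by their lower-left cell) sharing at least one cell with an `A²_{m−1,n−1}` domain
equals `(m+1)(n+1)f₂ − (m+1)n f₁ʰ⁰ − (n+1)m f₁ᵛ⁰ + mn f₀⁰` (stated additively). -/
theorem stmt10 (m n : ℕ) (hm : 1 ≤ m) (hn : 1 ≤ n) (S : Finset (ℤ × ℤ))
    (hS : A2 (m - 1) (n - 1) S) :
    ({q : ℤ × ℤ | ∃ p ∈ S, q.1 ≤ p.1 ∧ p.1 ≤ q.1 + m ∧ q.2 ≤ p.2 ∧ p.2 ≤ q.2 + n}).ncard
        + (m + 1) * n * (innerH S).ncard + (n + 1) * m * (innerV S).ncard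
      = (m + 1) * (n + 1) * S.card + m * n * (innerVert S).ncard := by
  classical
  set T : Finset (ℤ × ℤ) := vdil^[n] S with hT
  set D : Finset (ℤ × ℤ) := hdil^[m] T with hD
  set I : Finset ℤ := D.image Prod.fst with hI
  set J : Finset ℤ := D.image Prod.snd with hJ
  set fH : Finset (ℤ × ℤ) := S.filter (fun p => (p.1, p.2 - 1) ∈ S) with hfH
  set fV : Finset (ℤ × ℤ) := S.filter (fun p => (p.1 - 1, p.2) ∈ S) with hfV
  set fVT : Finset (ℤ × ℤ) := T.filter (fun p => (p.1 - 1, p.2) ∈ T) with hfVT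
  set f0 : Finset (ℤ × ℤ) :=
    S.filter (fun p => (p.1 - 1, p.2) ∈ S ∧ (p.1, p.2 - 1) ∈ S ∧ (p.1 - 1, p.2 - 1) ∈ S)
    with hf0
  -- membership chains
  have hST : ∀ p ∈ S, p ∈ T := by
    intro p hp
    rw [hT, Aux.mem_vdil_iter]
    exact ⟨0, le_refl _, by omega, by simpa using hp⟩
  have hTD : ∀ p ∈ T, p ∈ D := by
    intro p hp
    rw [hD, Aux.mem_hdil_iter]
    exact ⟨0, le_refl _, by omega, by simpa using hp⟩
  have hIT : ∀ p ∈ T, p.1 ∈ I := fun p hp => Finset.mem_image.2 ⟨p, hTD p hp, rfl⟩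
  have hIS : ∀ p ∈ S, p.1 ∈ I := fun p hp => hIT p (hST p hp)
  have hIfH : ∀ p ∈ fH, p.1 ∈ I := fun p hp => hIS p (Finset.mem_of_mem_filter p hp)
  have hIfV : ∀ p ∈ fV, p.1 ∈ I := fun p hp => hIS p (Finset.mem_of_mem_filter p hp)
  have hIfVT : ∀ p ∈ fVT, p.1 ∈ I := fun p hp => hIT p (Finset.mem_of_mem_filter p hp)
  have hIf0 : ∀ p ∈ f0, p.1 ∈ I := fun p hp => hIS p (Finset.mem_of_mem_filter p hp)
  have hJD : ∀ p ∈ D, p.2 ∈ J := fun p hp => Finset.mem_image.2 ⟨p, hp, rfl⟩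
  have hJT : ∀ p ∈ T, p.2 ∈ J := fun p hp => hJD p (hTD p hp)
  have hJfVT : ∀ p ∈ fVT, p.2 ∈ J := fun p hp => hJT p (Finset.mem_of_mem_filter p hp)
  -- Gap facts for columns
  have gcol : ∀ i : ℤ, Aux.Gap n (col S i) := by
    intro i
    apply Aux.gap_of_chain
    intro t ht
    have h201 := Aux.A2_201 (Aux.A2_strip1 hS) t (by omega)
    have hdil0 : dil S 0 t = vdil^[t] S := by
      rw [dil, Function.iterate_zero_apply]
    have := (h201.2 i).1
    rw [hdil0, Aux.col_vdil_iter] at this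
    exact this
  have gcolU : ∀ i : ℤ, Aux.Gap n (col S i ∪ col S (i + 1)) := by
    intro i
    apply Aux.gap_of_chain
    intro t ht
    have h201 := Aux.A2_201 (Aux.A2_strip1 hS) t (by omega)
    have hdil0 : dil S 0 t = vdil^[t] S := by
      rw [dil, Function.iterate_zero_apply]
    have := (h201.2 i).2
    rw [hdil0, Aux.col_vdil_iter, Aux.col_vdil_iter, ← Aux.dil1_union] at this
    exact this
  -- Gap facts for rows of T
  have grow : ∀ j : ℤ, Aux.Gap m (row T j) := by
    intro j
    apply Aux.gap_of_chain
    intro t ht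
    have h210 := Aux.A2_210 hS t (by omega)
    have hVT : T = vdil (vdil^[n - 1] S) := by
      have hnn : n = (n - 1) + 1 := by omega
      rw [hT]
      conv_lhs => rw [hnn]
      rw [Function.iterate_succ_apply']
    have := (h210.2 (j - 1)).2
    rw [dil, Aux.row_hdil_iter, Aux.row_hdil_iter, ← Aux.dil1_union] at this
    have hj : j - 1 + 1 = j := by omega
    rw [hj] at this
    have hrowT : row T j = row (vdil^[n - 1] S) (j - 1) ∪ row (vdil^[n - 1] S) j := by
      rw [hVT, Aux.row_vdil, Set.union_comm]
    rw [hrowT]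
    exact this
  -- manifold pair condition
  have hMf := Aux.A2_manifold hS
  have hML : ∀ i : ℤ, Aux.MLpair (col S i) (col S (i - 1)) := by
    intro i j
    constructor
    · intro h1 h2
      by_contra hc
      push_neg at hc
      exact hMf i j (Or.inl ⟨h1, h2, hc.1, hc.2⟩)
    · intro h1 h2
      by_contra hc
      push_neg at hc
      exact hMf i j (Or.inr ⟨h2, h1, hc.1, hc.2⟩)
  have gcolU' : ∀ i : ℤ, Aux.Gap n (col S i ∪ col S (i - 1)) := by
    intro i
    have := gcolU (i - 1)
    rw [show i - 1 + 1 = i by omega, Set.union_comm] at this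
    exact this
  have ginter : ∀ i : ℤ, Aux.Gap n (col S i ∩ col S (i - 1)) := fun i =>
    Aux.gap_inter (hML i) (gcol i) (gcol (i - 1)) (gcolU' i)
  have hinterdil : ∀ i : ℤ,
      Aux.dil1 n (col S i) ∩ Aux.dil1 n (col S (i - 1)) = Aux.dil1 n (col S i ∩ col S (i - 1)) :=
    fun i => Aux.dil1_inter (hML i) (gcolU' i)
  -- set identities
  have idA : ∀ i : ℤ, col T i = Aux.dil1 n (col S i) := fun i => Aux.col_vdil_iter n S i
  have idE_colS : ∀ i : ℤ, Aux.E1 (col S i) = col fH i := by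
    intro i
    ext a
    simp [Aux.E1, col, hfH, Finset.mem_filter]
  have idcol_fV : ∀ i : ℤ, col fV i = col S i ∩ col S (i - 1) := by
    intro i
    ext a
    simp [col, hfV, Finset.mem_filter]
  have idcol_fVT : ∀ i : ℤ, col fVT i = col T i ∩ col T (i - 1) := by
    intro i
    ext a
    simp [col, hfVT, Finset.mem_filter]
  have idE_fV : ∀ i : ℤ, Aux.E1 (col fV i) = col f0 i := by
    intro i
    ext a
    simp only [Aux.mem_E1, col, Set.mem_setOf_eq, hfV, hf0, Finset.mem_filter]
    tauto
  have idrow_fVT : ∀ j : ℤ, row fVT j = Aux.E1 (row T j) := by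
    intro j
    ext a
    simp [row, hfVT, Finset.mem_filter, Aux.mem_E1]
  have idrowD : ∀ j : ℤ, row D j = Aux.dil1 m (row T j) := fun j => Aux.row_hdil_iter m T j
  -- the three counting identities
  have eq2 : T.card + n * fH.card = (n + 1) * S.card := by
    rw [Aux.card_eq_sum_col T I hIT, Aux.card_eq_sum_col fH I hIfH,
      Aux.card_eq_sum_col S I hIS, Finset.mul_sum, ← Finset.sum_add_distrib, Finset.mul_sum]
    refine Finset.sum_congr rfl fun i _ => ?_
    rw [idA, ← idE_colS]
    exact Aux.main1' n (col S i) (Aux.col_finite S i) (gcol i)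
  have eq3 : fVT.card + n * f0.card = (n + 1) * fV.card := by
    rw [Aux.card_eq_sum_col fVT I hIfVT, Aux.card_eq_sum_col f0 I hIf0,
      Aux.card_eq_sum_col fV I hIfV, Finset.mul_sum, ← Finset.sum_add_distrib, Finset.mul_sum]
    refine Finset.sum_congr rfl fun i _ => ?_
    rw [idcol_fVT, idA, idA, hinterdil, ← idcol_fV, ← idE_fV]
    refine Aux.main1' n (col fV i) (Aux.col_finite fV i) ?_
    rw [idcol_fV]
    exact ginter i
  have eq1 : D.card + m * fVT.card = (m + 1) * T.card := by
    rw [Aux.card_eq_sum_row D J hJD, Aux.card_eq_sum_row fVT J hJfVT,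
      Aux.card_eq_sum_row T J hJT, Finset.mul_sum, ← Finset.sum_add_distrib, Finset.mul_sum]
    refine Finset.sum_congr rfl fun j _ => ?_
    rw [idrowD, idrow_fVT]
    exact Aux.main1' m (row T j) (Aux.row_finite T j) (grow j)
  -- identify the pieces of the statement
  have hQ : ({q : ℤ × ℤ | ∃ p ∈ S, q.1 ≤ p.1 ∧ p.1 ≤ q.1 + m ∧ q.2 ≤ p.2 ∧ p.2 ≤ q.2 + n}).ncard
      = D.card := by
    have hmemQ : ∀ q : ℤ × ℤ,
        (∃ p ∈ S, q.1 ≤ p.1 ∧ p.1 ≤ q.1 + m ∧ q.2 ≤ p.2 ∧ p.2 ≤ q.2 + n) ↔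
        (q.1 + m, q.2 + n) ∈ D := by
      intro q
      rw [hD, Aux.mem_hdil_iter]
      constructor
      · rintro ⟨p, hp, h1, h2, h3, h4⟩
        refine ⟨q.1 + m - p.1, by omega, by omega, ?_⟩
        rw [hT, Aux.mem_vdil_iter]
        refine ⟨q.2 + n - p.2, by omega, by omega, ?_⟩
        simp only
        have hpe : (q.1 + ↑m - (q.1 + ↑m - p.1), q.2 + ↑n - (q.2 + ↑n - p.2)) = p := by
          have : q.1 + ↑m - (q.1 + ↑m - p.1) = p.1 := by omega
          have h' : q.2 + ↑n - (q.2 + ↑n - p.2) = p.2 := by omega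
          rw [this, h']
        rw [hpe]
        exact hp
      · rintro ⟨s, hs0, hsm, hmem⟩
        rw [hT, Aux.mem_vdil_iter] at hmem
        obtain ⟨t, ht0, htn, hmem⟩ := hmem
        exact ⟨(q.1 + m - s, q.2 + n - t), hmem, by omega, by omega, by omega, by omega⟩
    have himg : {q : ℤ × ℤ | ∃ p ∈ S, q.1 ≤ p.1 ∧ p.1 ≤ q.1 + m ∧ q.2 ≤ p.2 ∧ p.2 ≤ q.2 + n}
        = (fun r : ℤ × ℤ => (r.1 - m, r.2 - n)) '' ↑D := by
      ext q
      rw [Set.mem_setOf_eq, hmemQ q]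
      constructor
      · intro h
        refine ⟨(q.1 + m, q.2 + n), h, ?_⟩
        simp only
        have h1 : q.1 + (m:ℤ) - m = q.1 := by omega
        have h2 : q.2 + (n:ℤ) - n = q.2 := by omega
        rw [h1, h2]
      · rintro ⟨r, hr, rfl⟩
        simp only
        have h1 : r.1 - (m:ℤ) + m = r.1 := by omega
        have h2 : r.2 - (n:ℤ) + n = r.2 := by omega
        rw [h1, h2]
        exact hr
    rw [himg, Set.ncard_image_of_injOn, Set.ncard_coe_finset]
    rintro ⟨a, b⟩ _ ⟨c, d⟩ _ h
    simp only [Prod.mk.injEq] at h ⊢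
    omega
  have hfHc : (innerH S).ncard = fH.card := by
    rw [← Set.ncard_coe_finset fH]
    congr 1
    ext ⟨a, b⟩
    simp [innerH, hfH, Finset.mem_filter]
  have hfVc : (innerV S).ncard = fV.card := by
    rw [← Set.ncard_coe_finset fV]
    congr 1
    ext ⟨a, b⟩
    simp [innerV, hfV, Finset.mem_filter]
  have hf0c : (innerVert S).ncard = f0.card := by
    rw [← Set.ncard_coe_finset f0]
    congr 1
    ext ⟨a, b⟩
    simp only [innerVert, Set.mem_setOf_eq, hf0, Finset.coe_filter, Finset.mem_filter]
  rw [hQ, hfHc, hfVc, hf0c]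
  -- final arithmetic
  have e1 : (D.card : ℤ) + m * fVT.card = (m + 1) * T.card := by exact_mod_cast eq1
  have e2 : (T.card : ℤ) + n * fH.card = (n + 1) * S.card := by exact_mod_cast eq2
  have e3 : (fVT.card : ℤ) + n * f0.card = (n + 1) * fV.card := by exact_mod_cast eq3
  have : (D.card : ℤ) + (m + 1) * n * fH.card + (n + 1) * m * fV.card
      = (m + 1) * (n + 1) * S.card + m * n * f0.card := by
    linear_combination e1 + ((m : ℤ) + 1) * e2 - (m : ℤ) * e3
  exact_mod_cast this
end
end

section
/- One-dimensional spline extension: for m ≥ 1 and Ω ∈ A¹_{m−1}, every spline f ∈ S_m(T) on Ω (C^{m−1}, degree-m piecewise polynomial on cells) extends to a spline f̃ of degree m and smoothness C^{m−1} defined on all of ℝ with respect to the infinite grid T', with f̃|_Ω = f. -/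
open Set

noncomputable section

/-!
Induct over the cells of `Ω` from left to right. Suppose `f` has been extended from the cells
left of the last cell `[M, M + 1]` to a global spline `F`; on that cell `f - F` is a polynomial
`d` of degree `≤ m`, and it suffices to find a global spline that vanishes on the earlier cells
and equals `d` on `[M, M + 1]`. If the cell `[M - 1, M]` also lies in `Ω`, then `f - F` is
`C^{m-1}` across `M` and vanishes to its left, so `d = e (x - M)^m` and `e (x - M)₊^m` works.
Otherwise admissibility leaves at least `m` empty cells before `M`, and `d` is a combination of
the truncated powers `(x - M + i)₊^m`, `i = 0, …, m`, because the powers `(X - tᵢ)^m` at `m + 1`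
distinct points span the polynomials of degree `≤ m` (a Vandermonde argument).
-/

open Polynomial

namespace Polynomial

variable {K : Type*} [Field K] [CharZero K]

theorem exists_eq_C_mul_X_sub_C_pow_of_iterate_derivative_eval_eq_zero {d : K[X]} {m : ℕ}
    {c : K} (hd : d.natDegree ≤ m) (h : ∀ i < m, (derivative^[i] d).eval c = 0) :
    ∃ e : K, d = C e * (X - C c) ^ m := by
  rcases eq_or_ne d 0 with rfl | hd0
  · exact ⟨0, by simp⟩
  have hmult : m ≤ d.rootMultiplicity c := by
    rcases Nat.eq_zero_or_pos m with rfl | hm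
    · exact Nat.zero_le _
    have := lt_rootMultiplicity_of_isRoot_iterate_derivative (n := m - 1) hd0
      fun i hi => h i (by omega)
    omega
  obtain ⟨g, rfl⟩ := (pow_dvd_pow _ hmult).trans (pow_rootMultiplicity_dvd d c)
  have hg : g.natDegree = 0 := by
    rw [natDegree_mul (pow_ne_zero _ (X_sub_C_ne_zero c)) (right_ne_zero_of_mul hd0),
      natDegree_pow, natDegree_X_sub_C] at hd
    omega
  exact ⟨g.coeff 0, by rw [mul_comm, ← eq_C_of_natDegree_eq_zero hg]⟩

theorem mem_degreeLT_succ_of_natDegree_le {R : Type*} [Semiring R] {p : R[X]} {n : ℕ}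
    (hp : p.natDegree ≤ n) : p ∈ degreeLT R (n + 1) :=
  mem_degreeLT.2 <| (degree_le_of_natDegree_le hp).trans_lt <| by exact_mod_cast n.lt_succ_self

theorem linearIndependent_X_sub_C_pow {n : ℕ} {t : Fin (n + 1) → K}
    (ht : Function.Injective t) : LinearIndependent K fun i => (X - C (t i)) ^ n := by
  rw [Fintype.linearIndependent_iff]
  intro g hg
  refine congrFun (Matrix.eq_zero_of_forall_pow_sum_mul_pow_eq_zero (f := fun i => -t i)
    (neg_injective.comp ht) fun j => ?_)
  have hcoeff := congrArg (coeff · (n - j)) hg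
  have hchoose : (n.choose (n - j) : K) ≠ 0 :=
    Nat.cast_ne_zero.2 (Nat.choose_pos (Nat.sub_le n j)).ne'
  simp only [finsetSum_coeff, coeff_smul, sub_eq_add_neg, ← C_neg, coeff_X_add_C_pow,
    Nat.sub_sub_self j.is_le, coeff_zero, smul_eq_mul] at hcoeff
  simpa [← mul_assoc, ← Finset.sum_mul, hchoose] using hcoeff

theorem span_X_sub_C_pow_eq_degreeLT {n : ℕ} {t : Fin (n + 1) → K}
    (ht : Function.Injective t) :
    Submodule.span K (Set.range fun i => (X - C (t i)) ^ n) = degreeLT K (n + 1) := by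
  have : FiniteDimensional K (degreeLT K (n + 1)) :=
    (degreeLTEquiv K (n + 1)).symm.finiteDimensional
  refine Submodule.eq_of_le_of_finrank_eq ?_ ?_
  · rw [Submodule.span_le]
    rintro _ ⟨i, rfl⟩
    exact mem_degreeLT_succ_of_natDegree_le (by simp)
  · rw [finrank_span_eq_card (linearIndependent_X_sub_C_pow ht), Fintype.card_fin,
      (degreeLTEquiv K (n + 1)).finrank_eq, Module.finrank_fin_fun]

theorem exists_sum_C_mul_X_sub_C_pow_eq {n : ℕ} {t : Fin (n + 1) → K}
    (ht : Function.Injective t) {p : K[X]} (hp : p.natDegree ≤ n) :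
    ∃ c : Fin (n + 1) → K, ∑ i, C (c i) * (X - C (t i)) ^ n = p := by
  have hmem := mem_degreeLT_succ_of_natDegree_le hp
  rw [← span_X_sub_C_pow_eq_degreeLT ht, Submodule.mem_span_range_iff_exists_fun] at hmem
  simpa only [smul_eq_C_mul] using hmem

theorem iteratedDeriv_eval {𝕜 : Type*} [NontriviallyNormedField 𝕜] (p : 𝕜[X]) (n : ℕ) :
    iteratedDeriv n (fun x => p.eval x) = fun x => (derivative^[n] p).eval x := by
  induction n generalizing p with
  | zero => simp
  | succ n ih =>
    have hderiv : deriv (fun x => p.eval x) = fun x => (derivative p).eval x :=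
      _root_.funext fun x => Polynomial.deriv p
    rw [iteratedDeriv_succ', hderiv, ih, Function.iterate_succ_apply]

end Polynomial

theorem iteratedDerivWithin_eq_of_subset {𝕜 F : Type*} [NontriviallyNormedField 𝕜]
    [NormedAddCommGroup F] [NormedSpace 𝕜 F] {f : 𝕜 → F} {s t : Set 𝕜} {n : ℕ} {x : 𝕜}
    (st : s ⊆ t) (hs : UniqueDiffOn 𝕜 s) (ht : UniqueDiffOn 𝕜 t) (h : ContDiffOn 𝕜 n f t)
    (hx : x ∈ s) : iteratedDerivWithin n f s x = iteratedDerivWithin n f t x := by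
  simp only [iteratedDerivWithin_eq_iteratedFDerivWithin,
    iteratedFDerivWithin_subset st hs ht h hx]

theorem iterate_derivative_eval_eq_zero_of_contDiffOn {g : ℝ → ℝ} {n : ℕ} {l c r : ℝ}
    (hlc : l < c) (hcr : c < r) (hg : ContDiffOn ℝ n g (Icc l r)) (hzero : EqOn g 0 (Icc l c))
    {d : ℝ[X]} (hd : EqOn g (fun x => d.eval x) (Icc c r)) {i : ℕ} (hi : i ≤ n) :
    (derivative^[i] d).eval c = 0 := by
  have hgi : ContDiffOn ℝ i g (Icc l r) := hg.of_le (by exact_mod_cast hi)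
  have hud := uniqueDiffOn_Icc (hlc.trans hcr)
  have hleft : iteratedDerivWithin i g (Icc l r) c = 0 := by
    rw [← iteratedDerivWithin_eq_of_subset (Icc_subset_Icc_right hcr.le) (uniqueDiffOn_Icc hlc)
      hud hgi (right_mem_Icc.2 hlc.le), iteratedDerivWithin_congr hzero (right_mem_Icc.2 hlc.le)]
    simp
  have hright : iteratedDerivWithin i g (Icc l r) c = (derivative^[i] d).eval c := by
    rw [← iteratedDerivWithin_eq_of_subset (Icc_subset_Icc_left hlc.le) (uniqueDiffOn_Icc hcr)
      hud hgi (left_mem_Icc.2 hcr.le), iteratedDerivWithin_congr hd (left_mem_Icc.2 hcr.le),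
      iteratedDerivWithin_eq_iteratedDeriv (uniqueDiffOn_Icc hcr)
        (by simpa using (d.contDiff_aeval (𝕜 := ℝ) i).contDiffAt) (left_mem_Icc.2 hcr.le),
      iteratedDeriv_eval]
  rw [← hright, hleft]

theorem hasDerivAt_max_zero_pow (n : ℕ) (x : ℝ) :
    HasDerivAt (fun y : ℝ => max y 0 ^ (n + 2)) ((n + 2) * max x 0 ^ (n + 1)) x := by
  refine hasDerivAt_of_hasDerivAt_of_ne' (x := 0) (g := fun y => (n + 2) * max y 0 ^ (n + 1))
    (fun y hy => ?_) (by fun_prop) (by fun_prop) x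
  rcases hy.lt_or_gt with hy | hy
  · have hzero : (fun z : ℝ => max z 0 ^ (n + 2)) =ᶠ[nhds y] fun _ => 0 := by
      filter_upwards [Iio_mem_nhds hy] with z hz
      simp [max_eq_right (le_of_lt (mem_Iio.1 hz))]
    simpa [max_eq_right hy.le] using (hasDerivAt_const y (0 : ℝ)).congr_of_eventuallyEq hzero
  · have hpow : (fun z : ℝ => max z 0 ^ (n + 2)) =ᶠ[nhds y] fun z => z ^ (n + 2) := by
      filter_upwards [Ioi_mem_nhds hy] with z hz
      rw [max_eq_left (le_of_lt (mem_Ioi.1 hz))]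
    simpa [max_eq_left hy.le] using (hasDerivAt_pow (n + 2) y).congr_of_eventuallyEq hpow

theorem contDiff_max_zero_pow (n : ℕ) : ContDiff ℝ n fun x : ℝ => max x 0 ^ (n + 1) := by
  induction n with
  | zero => simpa using continuous_id.max continuous_const
  | succ n ih =>
    rw [Nat.cast_succ, contDiff_succ_iff_deriv]
    refine ⟨fun x => (hasDerivAt_max_zero_pow n x).differentiableAt, by simp, ?_⟩
    rw [funext fun x => (hasDerivAt_max_zero_pow n x).deriv]
    exact contDiff_const.mul ih

def truncPow (m : ℕ) (t x : ℝ) : ℝ := max (x - t) 0 ^ m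

theorem truncPow_eq_zero_of_le {m : ℕ} (hm : m ≠ 0) {t x : ℝ} (h : x ≤ t) :
    truncPow m t x = 0 := by
  rw [truncPow, max_eq_right (sub_nonpos.2 h), zero_pow hm]

theorem truncPow_eq_pow_of_le {m : ℕ} {t x : ℝ} (h : t ≤ x) : truncPow m t x = (x - t) ^ m := by
  rw [truncPow, max_eq_left (sub_nonneg.2 h)]

theorem contDiff_truncPow (n : ℕ) (t : ℝ) : ContDiff ℝ n (truncPow (n + 1) t) :=
  (contDiff_max_zero_pow n).comp (contDiff_id.sub contDiff_const)

theorem exists_sum_smul_truncPow_eqOn {m : ℕ} {t : Fin (m + 1) → ℝ}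
    (ht : Function.Injective t) {p : ℝ[X]} (hp : p.natDegree ≤ m) :
    ∃ c : Fin (m + 1) → ℝ,
      EqOn (∑ i, c i • truncPow m (t i)) (fun x => p.eval x) {x | ∀ i, t i ≤ x} := by
  obtain ⟨c, hc⟩ := exists_sum_C_mul_X_sub_C_pow_eq ht hp
  refine ⟨c, fun x hx => ?_⟩
  simp [← hc, Finset.sum_apply, eval_finsetSum, truncPow_eq_pow_of_le (hx _)]

theorem cellU1_insert (M : ℤ) (S : Finset ℤ) :
    cellU1 (insert M S) = Icc (M : ℝ) (M + 1) ∪ cellU1 S :=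
  Finset.set_biUnion_insert _ _ _

theorem Icc_subset_cellU1 {S : Finset ℤ} {k : ℤ} (hk : k ∈ S) :
    Icc (k : ℝ) (k + 1) ⊆ cellU1 S :=
  subset_biUnion_of_mem (u := fun k : ℤ => Icc (k : ℝ) (k + 1)) hk

theorem cellU1_subset_Iic {S : Finset ℤ} {a : ℤ} (h : ∀ k ∈ S, k + 1 ≤ a) :
    cellU1 S ⊆ Iic (a : ℝ) :=
  iUnion₂_subset fun k hk _ hx => hx.2.trans (by exact_mod_cast h k hk)

theorem Adm1.of_insert_max {k M : ℤ} {S : Finset ℤ} (h : Adm1 k ↑(insert M S))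
    (hlt : ∀ a ∈ S, a < M) : Adm1 k ↑S := by
  intro a b ha hb hab hgap
  refine h a b (Finset.mem_insert_of_mem ha) (Finset.mem_insert_of_mem hb) hab
    fun c hac hcb hc => ?_
  rcases Finset.mem_insert.1 hc with rfl | hc
  · exact (hcb.trans (hlt b hb)).false
  · exact hgap c hac hcb hc

theorem Adm1.sub_one_mem_or_add_lt_of_insert_max {k M : ℤ} {S : Finset ℤ}
    (h : Adm1 k ↑(insert M S)) (hlt : ∀ a ∈ S, a < M) :
    M - 1 ∈ S ∨ ∀ a ∈ S, a + k + 1 < M := by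
  rcases S.eq_empty_or_nonempty with rfl | hne
  · simp
  have hmax := S.max'_mem hne
  have hneighbor : ∀ c, S.max' hne < c → c < M → c ∉ (↑(insert M S) : Set ℤ) := by
    intro c hc hcM hcS
    rcases Finset.mem_insert.1 hcS with rfl | hcS
    · exact hcM.false
    · exact (S.le_max' c hcS).not_gt hc
  rcases h _ M (Finset.mem_insert_of_mem hmax) (Finset.mem_insert_self M S) (hlt _ hmax)
    hneighbor with hM | hgap
  · left
    rwa [hM, add_sub_cancel_right]
  · right
    intro a ha
    have := S.le_max' a ha
    omega

/-- The space `S_m(T')` of cardinal splines: `C^{m-1}` functions on `ℝ` that are polynomials of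
degree `≤ m` on every cell of the integer grid. -/
def cardinalSpline (m : ℕ) : Submodule ℝ (ℝ → ℝ) where
  carrier := {F | ContDiff ℝ (↑(m - 1) : ℕ∞) F ∧
    ∀ k : ℤ, ∃ p : ℝ[X], p.natDegree ≤ m ∧ ∀ x ∈ Icc (k : ℝ) (k + 1), F x = p.eval x}
  add_mem' := by
    rintro F G ⟨hF, hFp⟩ ⟨hG, hGp⟩
    refine ⟨hF.add hG, fun k => ?_⟩
    obtain ⟨p, hp, hFk⟩ := hFp k
    obtain ⟨q, hq, hGk⟩ := hGp k
    exact ⟨p + q, natDegree_add_le_of_degree_le hp hq, fun x hx => by simp [hFk x hx, hGk x hx]⟩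
  zero_mem' := ⟨contDiff_const, fun _ => ⟨0, by simp, fun _ _ => by simp⟩⟩
  smul_mem' := by
    rintro a F ⟨hF, hFp⟩
    refine ⟨contDiff_const.smul hF, fun k => ?_⟩
    obtain ⟨p, hp, hFk⟩ := hFp k
    exact ⟨C a * p, (natDegree_C_mul_le a p).trans hp, fun x hx => by simp [hFk x hx]⟩

theorem truncPow_mem_cardinalSpline {m : ℕ} (hm : m ≠ 0) (t : ℤ) :
    truncPow m t ∈ cardinalSpline m := by
  obtain ⟨n, rfl⟩ := Nat.exists_eq_succ_of_ne_zero hm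
  refine ⟨by simpa using contDiff_truncPow n t, fun k => ?_⟩
  by_cases htk : t ≤ k
  · refine ⟨(X - C (t : ℝ)) ^ (n + 1), by rw [natDegree_pow, natDegree_X_sub_C, mul_one],
      fun x hx => ?_⟩
    rw [truncPow_eq_pow_of_le ((Int.cast_le.2 htk).trans hx.1)]
    simp
  · refine ⟨0, by simp, fun x hx => ?_⟩
    rw [truncPow_eq_zero_of_le hm (hx.2.trans (by exact_mod_cast (by omega : k + 1 ≤ t))),
      eval_zero]

theorem exists_mem_cardinalSpline_eqOn_zero_eqOn_eval {m : ℕ} (hm : m ≠ 0) (M : ℤ)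
    {d : ℝ[X]} (hd : d.natDegree ≤ m) :
    ∃ G ∈ cardinalSpline m,
      EqOn G 0 (Iic ((M - m : ℤ) : ℝ)) ∧ EqOn G (fun x => d.eval x) (Ici (M : ℝ)) := by
  have ht : Function.Injective fun i : Fin (m + 1) => ((M - i : ℤ) : ℝ) := by
    intro i j hij
    simp only [Int.cast_inj, sub_right_inj, Nat.cast_inj] at hij
    exact Fin.ext hij
  obtain ⟨c, hc⟩ := exists_sum_smul_truncPow_eqOn ht hd
  refine ⟨_, Submodule.sum_mem _ fun i _ => Submodule.smul_mem _ _
    (truncPow_mem_cardinalSpline hm _), fun x hx => ?_, fun x hx => hc fun i => ?_⟩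
  · simp only [Finset.sum_apply, Pi.smul_apply, Pi.zero_apply]
    refine Finset.sum_eq_zero fun i _ => ?_
    have hknot : ((M - m : ℤ) : ℝ) ≤ ((M - i : ℤ) : ℝ) := Int.cast_le.2 (by omega)
    rw [truncPow_eq_zero_of_le hm (hx.trans hknot), smul_zero]
  · exact (Int.cast_le.2 (by omega)).trans hx

theorem exists_mem_cardinalSpline_eqOn_zero_eqOn_eval_of_contDiffOn {m : ℕ} (hm : m ≠ 0)
    (M : ℤ) {d : ℝ[X]} (hd : d.natDegree ≤ m) {g : ℝ → ℝ}
    (hg : ContDiffOn ℝ (m - 1 : ℕ) g (Icc ((M : ℝ) - 1) (M + 1)))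
    (hzero : EqOn g 0 (Icc ((M : ℝ) - 1) M))
    (hgd : EqOn g (fun x => d.eval x) (Icc (M : ℝ) (M + 1))) :
    ∃ G ∈ cardinalSpline m, EqOn G 0 (Iic (M : ℝ)) ∧ EqOn G (fun x => d.eval x) (Ici (M : ℝ)) := by
  obtain ⟨e, he⟩ := exists_eq_C_mul_X_sub_C_pow_of_iterate_derivative_eval_eq_zero hd
    fun i hi => iterate_derivative_eval_eq_zero_of_contDiffOn (by linarith) (by linarith) hg
      hzero hgd (by omega)
  refine ⟨e • truncPow m M, Submodule.smul_mem _ _ (truncPow_mem_cardinalSpline hm M),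
    fun x hx => ?_, fun x hx => ?_⟩
  · simp [truncPow_eq_zero_of_le hm hx]
  · simp [he, truncPow_eq_pow_of_le hx]

theorem exists_mem_cardinalSpline_eqOn_cellU1 {m : ℕ} (hm : m ≠ 0) (S : Finset ℤ)
    (hadm : Adm1 ((m : ℤ) - 1) ↑S) {f : ℝ → ℝ}
    (hf : ContDiffOn ℝ (↑(m - 1) : ℕ∞) f (cellU1 S))
    (hpoly : ∀ k ∈ S, ∃ p : ℝ[X], p.natDegree ≤ m ∧ ∀ x ∈ Icc (k : ℝ) (k + 1), f x = p.eval x) :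
    ∃ F ∈ cardinalSpline m, EqOn F f (cellU1 S) := by
  induction S using Finset.induction_on_max with
  | empty => exact ⟨0, zero_mem _, by simp [cellU1]⟩
  | insert M S hlt ih =>
    rw [cellU1_insert] at hf ⊢
    obtain ⟨F, hF, hFf⟩ := ih (hadm.of_insert_max hlt) (hf.mono subset_union_right)
      fun k hk => hpoly k (Finset.mem_insert_of_mem hk)
    obtain ⟨q, hq, hfq⟩ := hpoly M (Finset.mem_insert_self M S)
    obtain ⟨r, hr, hFr⟩ := hF.2 M
    have hd : (q - r).natDegree ≤ m := (natDegree_sub_le q r).trans (max_le hq hr)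
    obtain ⟨G, hG, hG0, hGd⟩ : ∃ G ∈ cardinalSpline m, EqOn G 0 (cellU1 S) ∧
        EqOn G (fun x => (q - r).eval x) (Icc M (M + 1)) := by
      rcases hadm.sub_one_mem_or_add_lt_of_insert_max hlt with hM | hgap
      · have hcell : Icc ((M : ℝ) - 1) M ⊆ cellU1 S := by simpa using Icc_subset_cellU1 hM
        have hsub : Icc ((M : ℝ) - 1) (M + 1) ⊆ Icc (M : ℝ) (M + 1) ∪ cellU1 S := fun x hx =>
          (le_total x M).elim (fun hxM => .inr (hcell ⟨hx.1, hxM⟩)) fun hxM => .inl ⟨hxM, hx.2⟩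
        obtain ⟨G, hG, hG0, hGd⟩ := exists_mem_cardinalSpline_eqOn_zero_eqOn_eval_of_contDiffOn
          hm M hd (g := f - F) ((hf.mono hsub).sub hF.1.contDiffOn)
          (fun x hx => sub_eq_zero.2 (hFf (hcell hx)).symm)
          (fun x hx => by simp [hfq x hx, hFr x hx])
        exact ⟨G, hG, hG0.mono (cellU1_subset_Iic fun k hk => hlt k hk),
          hGd.mono Icc_subset_Ici_self⟩
      · obtain ⟨G, hG, hG0, hGd⟩ := exists_mem_cardinalSpline_eqOn_zero_eqOn_eval hm M hd
        exact ⟨G, hG, hG0.mono (cellU1_subset_Iic fun k hk => by linarith [hgap k hk]),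
          hGd.mono Icc_subset_Ici_self⟩
    refine ⟨F + G, add_mem hF hG, ?_⟩
    rintro x (hx | hx)
    · simp [hfq x hx, hFr x hx, hGd hx]
    · simp [hFf hx, hG0 hx]

/-- One-dimensional spline extension: for `Ω ∈ A¹_{m−1}`, every `C^{m−1}` piecewise
polynomial of degree `m` on `Ω` extends to a global `C^{m−1}` spline of degree `m`
on `ℝ` with respect to the full integer grid. -/
theorem stmt14 (m : ℕ) (hm : 1 ≤ m) (S : Finset ℤ)
    (hadm : Adm1 ((m : ℤ) - 1) (↑S : Set ℤ))
    (f : ℝ → ℝ) (hsm : ContDiffOn ℝ (↑(m - 1) : ℕ∞) f (cellU1 S))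
    (hpoly : ∀ k ∈ S, ∃ p : Polynomial ℝ, p.natDegree ≤ m ∧
      ∀ x ∈ Set.Icc (k : ℝ) (k + 1), f x = p.eval x) :
    ∃ F : ℝ → ℝ, ContDiff ℝ (↑(m - 1) : ℕ∞) F ∧
      (∀ k : ℤ, ∃ p : Polynomial ℝ, p.natDegree ≤ m ∧
        ∀ x ∈ Set.Icc (k : ℝ) (k + 1), F x = p.eval x) ∧
      Set.EqOn F f (cellU1 S) := by
  obtain ⟨F, ⟨hsmooth, hpiece⟩, hF⟩ :=
    exists_mem_cardinalSpline_eqOn_cellU1 (Nat.one_le_iff_ne_zero.1 hm) S hadm hsm hpoly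
  exact ⟨F, hsmooth, hpiece, hF⟩
end
end

section
/- Equivalence of the two inductive definitions of the admissible class: for integers k₁, k₂ > 0, the set {Ω ∈ A²_{k₁−1,k₂} : Ω^e_{k₁−1,k₂} ∈ A²_{1,0}} equals the set {Ω ∈ A²_{k₁,k₂−1} : Ω^e_{k₁,k₂−1} ∈ A²_{0,1}}. -/
open Set

noncomputable section

namespace Stmt15Aux

/-! ### Basic facts about `Adm1 1` -/

lemma adm1_of {A : Set ℤ} (h : ∀ a : ℤ, a ∈ A → a + 2 ∈ A → a + 1 ∈ A) : Adm1 1 A := by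
  intro a b ha hb hab hgap
  by_contra hc
  push_neg at hc
  obtain ⟨h1, h2⟩ := hc
  have hb2 : b = a + 2 := by omega
  subst hb2
  exact hgap (a + 1) (by omega) (by omega) (h a ha hb)

lemma adm1_mid {A : Set ℤ} (h : Adm1 1 A) (a : ℤ) (h1 : a ∈ A) (h2 : a + 2 ∈ A) :
    a + 1 ∈ A := by
  by_contra hc
  rcases h a (a + 2) h1 h2 (by omega) (fun c hc1 hc2 hcA => by
    have : c = a + 1 := by omega
    exact hc (this ▸ hcA)) with h' | h' <;> omega

lemma adm1_mid3 {A : Set ℤ} (h : Adm1 1 A) {a b c : ℤ} (hb : b = a + 1) (hc : c = a + 2)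
    (h1 : a ∈ A) (h2 : c ∈ A) : b ∈ A := by
  subst hb hc; exact adm1_mid h a h1 h2

/-! ### Membership in dilatations -/

lemma mem_hdil {S : Finset (ℤ × ℤ)} {x y : ℤ} :
    (x, y) ∈ hdil S ↔ (x, y) ∈ S ∨ (x - 1, y) ∈ S := by
  simp only [hdil, Finset.mem_union, Finset.mem_image, Prod.exists]
  constructor
  · rintro (h | ⟨a, b, hab, heq⟩)
    · exact Or.inl h
    · right
      have e1 : a + 1 = x := congrArg Prod.fst heq
      have e2 : b = y := congrArg Prod.snd heq
      have e3 : a = x - 1 := by omega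
      subst e3; subst e2; exact hab
  · rintro (h | h)
    · exact Or.inl h
    · exact Or.inr ⟨x - 1, y, h, by rw [show x - 1 + 1 = x from by ring]⟩

lemma mem_vdil {S : Finset (ℤ × ℤ)} {x y : ℤ} :
    (x, y) ∈ vdil S ↔ (x, y) ∈ S ∨ (x, y - 1) ∈ S := by
  simp only [vdil, Finset.mem_union, Finset.mem_image, Prod.exists]
  constructor
  · rintro (h | ⟨a, b, hab, heq⟩)
    · exact Or.inl h
    · right
      have e1 : a = x := congrArg Prod.fst heq
      have e2 : b + 1 = y := congrArg Prod.snd heq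
      have e3 : b = y - 1 := by omega
      subst e3; subst e1; exact hab
  · rintro (h | h)
    · exact Or.inl h
    · exact Or.inr ⟨x, y - 1, h, by rw [show y - 1 + 1 = y from by ring]⟩

lemma row_vdil (T : Finset (ℤ × ℤ)) (j : ℤ) :
    row (vdil T) j = row T (j - 1) ∪ row T j := by
  ext i
  simp only [row, Set.mem_setOf_eq, Set.mem_union, mem_vdil]
  exact or_comm

lemma col_hdil (T : Finset (ℤ × ℤ)) (i : ℤ) :
    col (hdil T) i = col T (i - 1) ∪ col T i := by
  ext j
  simp only [col, Set.mem_setOf_eq, Set.mem_union, mem_hdil]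
  exact or_comm

lemma union_merge {A B C : Set ℤ} : (A ∪ B) ∪ (B ∪ C) = A ∪ B ∪ C := by
  ext x; simp only [Set.mem_union]; tauto

/-! ### Slack "middle element" helpers -/

section Helpers

variable {T : Finset (ℤ × ℤ)}

/-- Slack form of admissibility of single columns. -/
lemma Hcs (hcs : ∀ i, Adm1 1 (col T i)) {i a b c : ℤ} (hb : b = a + 1) (hc : c = a + 2)
    (h1 : (i, a) ∈ T) (h2 : (i, c) ∈ T) : (i, b) ∈ T :=
  adm1_mid3 (hcs i) hb hc h1 h2

/-- Slack form of admissibility of single rows. -/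
lemma Hrs (hrs : ∀ j, Adm1 1 (row T j)) {j a b c : ℤ} (hb : b = a + 1) (hc : c = a + 2)
    (h1 : (a, j) ∈ T) (h2 : (c, j) ∈ T) : (b, j) ∈ T :=
  adm1_mid3 (hrs j) hb hc h1 h2

/-- Slack form of admissibility of pairs of adjacent columns. -/
lemma Hcp (hcp : ∀ i, Adm1 1 (col T i ∪ col T (i + 1)))
    {i₁ i₂ a b c : ℤ} (hi : i₂ = i₁ + 1) (hb : b = a + 1) (hc : c = a + 2)
    (h1 : (i₁, a) ∈ T ∨ (i₂, a) ∈ T) (h2 : (i₁, c) ∈ T ∨ (i₂, c) ∈ T) :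
    (i₁, b) ∈ T ∨ (i₂, b) ∈ T := by
  subst hi
  have := adm1_mid3 (hcp i₁) hb hc (by simpa [col] using h1) (by simpa [col] using h2)
  simpa [col] using this

/-- Slack form of admissibility of pairs of adjacent rows. -/
lemma Hrp (hrp : ∀ j, Adm1 1 (row T j ∪ row T (j + 1)))
    {j₁ j₂ a b c : ℤ} (hj : j₂ = j₁ + 1) (hb : b = a + 1) (hc : c = a + 2)
    (h1 : (a, j₁) ∈ T ∨ (a, j₂) ∈ T) (h2 : (c, j₁) ∈ T ∨ (c, j₂) ∈ T) :
    (b, j₁) ∈ T ∨ (b, j₂) ∈ T := by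
  subst hj
  have := adm1_mid3 (hrp j₁) hb hc (by simpa [row] using h1) (by simpa [row] using h2)
  simpa [row] using this

/-- Slack form of admissibility of triples of adjacent columns. -/
lemma Hct (hct : ∀ i, Adm1 1 (col T i ∪ col T (i + 1) ∪ col T (i + 2)))
    {i₁ i₂ i₃ a b c : ℤ} (hi2 : i₂ = i₁ + 1) (hi3 : i₃ = i₁ + 2)
    (hb : b = a + 1) (hc : c = a + 2)
    (h1 : (i₁, a) ∈ T ∨ (i₂, a) ∈ T ∨ (i₃, a) ∈ T)
    (h2 : (i₁, c) ∈ T ∨ (i₂, c) ∈ T ∨ (i₃, c) ∈ T) :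
    (i₁, b) ∈ T ∨ (i₂, b) ∈ T ∨ (i₃, b) ∈ T := by
  subst hi2 hi3
  have := adm1_mid3 (hct i₁) hb hc (by simpa [col, or_assoc] using h1)
    (by simpa [col, or_assoc] using h2)
  simpa [col, or_assoc] using this

/-- Slack form of admissibility of triples of adjacent rows. -/
lemma Hrt (hrt : ∀ j, Adm1 1 (row T j ∪ row T (j + 1) ∪ row T (j + 2)))
    {j₁ j₂ j₃ a b c : ℤ} (hj2 : j₂ = j₁ + 1) (hj3 : j₃ = j₁ + 2)
    (hb : b = a + 1) (hc : c = a + 2)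
    (h1 : (a, j₁) ∈ T ∨ (a, j₂) ∈ T ∨ (a, j₃) ∈ T)
    (h2 : (c, j₁) ∈ T ∨ (c, j₂) ∈ T ∨ (c, j₃) ∈ T) :
    (b, j₁) ∈ T ∨ (b, j₂) ∈ T ∨ (b, j₃) ∈ T := by
  subst hj2 hj3
  have := adm1_mid3 (hrt j₁) hb hc (by simpa [row, or_assoc] using h1)
    (by simpa [row, or_assoc] using h2)
  simpa [row, or_assoc] using this

/-! ### The four combinatorial facts -/

/-- Single rows are admissible, given single columns and pairs of rows. -/
lemma rows_single (hcs : ∀ i, Adm1 1 (col T i))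
    (hrp : ∀ j, Adm1 1 (row T j ∪ row T (j + 1))) (j : ℤ) : Adm1 1 (row T j) := by
  apply adm1_of
  intro a h1 h2
  simp only [row, Set.mem_setOf_eq] at h1 h2 ⊢
  have u1 := Hrp hrp (j₁ := j) rfl rfl rfl (Or.inl h1) (Or.inl h2)
  have u2 := Hrp hrp (j₁ := j - 1) (j₂ := j) (by ring) rfl rfl (Or.inr h1) (Or.inr h2)
  rcases u1 with h | h
  · exact h
  rcases u2 with h' | h'
  · exact Hcs hcs (a := j - 1) (by ring) (by ring) h' h
  · exact h'

/-- Single columns are admissible, given single rows and pairs of columns. -/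
lemma cols_single (hrs : ∀ j, Adm1 1 (row T j))
    (hcp : ∀ i, Adm1 1 (col T i ∪ col T (i + 1))) (i : ℤ) : Adm1 1 (col T i) := by
  apply adm1_of
  intro a h1 h2
  simp only [col, Set.mem_setOf_eq] at h1 h2 ⊢
  have u1 := Hcp hcp (i₁ := i) rfl rfl rfl (Or.inl h1) (Or.inl h2)
  have u2 := Hcp hcp (i₁ := i - 1) (i₂ := i) (by ring) rfl rfl (Or.inr h1) (Or.inr h2)
  rcases u1 with h | h
  · exact h
  rcases u2 with h' | h'
  · exact Hrs hrs (a := i - 1) (by ring) (by ring) h' h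
  · exact h'

/-- Triples of columns are admissible, given pairs of columns and triples of rows. -/
lemma cols_triple (hcp : ∀ i, Adm1 1 (col T i ∪ col T (i + 1)))
    (hrt : ∀ j, Adm1 1 (row T j ∪ row T (j + 1) ∪ row T (j + 2))) (i : ℤ) :
    Adm1 1 (col T i ∪ col T (i + 1) ∪ col T (i + 2)) := by
  apply adm1_of
  intro j h1 h2
  simp only [col, Set.mem_setOf_eq, Set.mem_union, or_assoc] at h1 h2 ⊢
  -- helper: if j and j+2 are both hit within an adjacent pair of columns, conclude
  have pair : ∀ i₁ i₂ : ℤ, i₂ = i₁ + 1 →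
      ((i₁ = i ∨ i₁ = i + 1 ∨ i₁ = i + 2) ∧ (i₂ = i ∨ i₂ = i + 1 ∨ i₂ = i + 2)) →
      ((i₁, j) ∈ T ∨ (i₂, j) ∈ T) → ((i₁, j + 2) ∈ T ∨ (i₂, j + 2) ∈ T) →
      (i, j + 1) ∈ T ∨ (i + 1, j + 1) ∈ T ∨ (i + 2, j + 1) ∈ T := by
    intro i₁ i₂ hi hrange hj hj2
    have hmid := Hcp hcp hi (rfl : j + 1 = j + 1) (rfl : j + 2 = j + 2) hj hj2
    rcases hmid with h | h
    · rcases hrange.1 with e | e | e <;> rw [e] at h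
      exacts [Or.inl h, Or.inr (Or.inl h), Or.inr (Or.inr h)]
    · rcases hrange.2 with e | e | e <;> rw [e] at h
      exacts [Or.inl h, Or.inr (Or.inl h), Or.inr (Or.inr h)]
  rcases h1 with hx | hx | hx <;> rcases h2 with hy | hy | hy
  · exact pair i (i + 1) rfl ⟨by omega, by omega⟩ (Or.inl hx) (Or.inl hy)
  · exact pair i (i + 1) rfl ⟨by omega, by omega⟩ (Or.inl hx) (Or.inr hy)
  · -- cross case: (i, j) ∈ T and (i + 2, j + 2) ∈ T
    have mid := Hrt hrt (j₁ := j) rfl rfl (rfl : i + 1 = i + 1) (rfl : i + 2 = i + 2)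
      (Or.inl hx) (Or.inr (Or.inr hy))
    rcases mid with h | h | h
    · exact pair (i + 1) (i + 2) (by ring) ⟨by omega, by omega⟩ (Or.inl h) (Or.inr hy)
    · exact Or.inr (Or.inl h)
    · exact pair i (i + 1) rfl ⟨by omega, by omega⟩ (Or.inl hx) (Or.inr h)
  · exact pair i (i + 1) rfl ⟨by omega, by omega⟩ (Or.inr hx) (Or.inl hy)
  · exact pair i (i + 1) rfl ⟨by omega, by omega⟩ (Or.inr hx) (Or.inr hy)
  · exact pair (i + 1) (i + 2) (by ring) ⟨by omega, by omega⟩ (Or.inl hx) (Or.inr hy)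
  · -- cross case: (i + 2, j) ∈ T and (i, j + 2) ∈ T
    have mid := Hrt hrt (j₁ := j) rfl rfl (rfl : i + 1 = i + 1) (rfl : i + 2 = i + 2)
      (Or.inr (Or.inr hy)) (Or.inl hx)
    rcases mid with h | h | h
    · exact pair i (i + 1) rfl ⟨by omega, by omega⟩ (Or.inr h) (Or.inl hy)
    · exact Or.inr (Or.inl h)
    · exact pair (i + 1) (i + 2) (by ring) ⟨by omega, by omega⟩ (Or.inr hx) (Or.inl h)
  · exact pair (i + 1) (i + 2) (by ring) ⟨by omega, by omega⟩ (Or.inr hx) (Or.inl hy)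
  · exact pair (i + 1) (i + 2) (by ring) ⟨by omega, by omega⟩ (Or.inr hx) (Or.inr hy)

/-- Triples of rows are admissible, given pairs of rows and triples of columns. -/
lemma rows_triple (hrp : ∀ j, Adm1 1 (row T j ∪ row T (j + 1)))
    (hct : ∀ i, Adm1 1 (col T i ∪ col T (i + 1) ∪ col T (i + 2))) (j : ℤ) :
    Adm1 1 (row T j ∪ row T (j + 1) ∪ row T (j + 2)) := by
  apply adm1_of
  intro a h1 h2
  simp only [row, Set.mem_setOf_eq, Set.mem_union, or_assoc] at h1 h2 ⊢
  have pair : ∀ j₁ j₂ : ℤ, j₂ = j₁ + 1 →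
      ((j₁ = j ∨ j₁ = j + 1 ∨ j₁ = j + 2) ∧ (j₂ = j ∨ j₂ = j + 1 ∨ j₂ = j + 2)) →
      ((a, j₁) ∈ T ∨ (a, j₂) ∈ T) → ((a + 2, j₁) ∈ T ∨ (a + 2, j₂) ∈ T) →
      (a + 1, j) ∈ T ∨ (a + 1, j + 1) ∈ T ∨ (a + 1, j + 2) ∈ T := by
    intro j₁ j₂ hj hrange ha ha2
    have hmid := Hrp hrp hj (rfl : a + 1 = a + 1) (rfl : a + 2 = a + 2) ha ha2
    rcases hmid with h | h
    · rcases hrange.1 with e | e | e <;> rw [e] at h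
      exacts [Or.inl h, Or.inr (Or.inl h), Or.inr (Or.inr h)]
    · rcases hrange.2 with e | e | e <;> rw [e] at h
      exacts [Or.inl h, Or.inr (Or.inl h), Or.inr (Or.inr h)]
  rcases h1 with hx | hx | hx <;> rcases h2 with hy | hy | hy
  · exact pair j (j + 1) rfl ⟨by omega, by omega⟩ (Or.inl hx) (Or.inl hy)
  · exact pair j (j + 1) rfl ⟨by omega, by omega⟩ (Or.inl hx) (Or.inr hy)
  · -- cross case: (a, j) ∈ T and (a + 2, j + 2) ∈ T
    have mid := Hct hct (i₁ := a) rfl rfl (rfl : j + 1 = j + 1) (rfl : j + 2 = j + 2)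
      (Or.inl hx) (Or.inr (Or.inr hy))
    rcases mid with h | h | h
    · exact pair (j + 1) (j + 2) (by ring) ⟨by omega, by omega⟩ (Or.inl h) (Or.inr hy)
    · exact Or.inr (Or.inl h)
    · exact pair j (j + 1) rfl ⟨by omega, by omega⟩ (Or.inl hx) (Or.inr h)
  · exact pair j (j + 1) rfl ⟨by omega, by omega⟩ (Or.inr hx) (Or.inl hy)
  · exact pair j (j + 1) rfl ⟨by omega, by omega⟩ (Or.inr hx) (Or.inr hy)
  · exact pair (j + 1) (j + 2) (by ring) ⟨by omega, by omega⟩ (Or.inl hx) (Or.inr hy)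
  · -- cross case: (a, j + 2) ∈ T and (a + 2, j) ∈ T
    have mid := Hct hct (i₁ := a) rfl rfl (rfl : j + 1 = j + 1) (rfl : j + 2 = j + 2)
      (Or.inr (Or.inr hy)) (Or.inl hx)
    rcases mid with h | h | h
    · exact pair j (j + 1) rfl ⟨by omega, by omega⟩ (Or.inr h) (Or.inl hy)
    · exact Or.inr (Or.inl h)
    · exact pair (j + 1) (j + 2) (by ring) ⟨by omega, by omega⟩ (Or.inr hx) (Or.inl h)
  · exact pair (j + 1) (j + 2) (by ring) ⟨by omega, by omega⟩ (Or.inr hx) (Or.inl hy)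
  · exact pair (j + 1) (j + 2) (by ring) ⟨by omega, by omega⟩ (Or.inr hx) (Or.inr hy)

/-! ### Manifoldness of the dilatations -/

lemma ml_vdil (hcp : ∀ i, Adm1 1 (col T i ∪ col T (i + 1))) : ManifoldLike (vdil T) := by
  intro i j
  rintro (⟨h1, h2, h3, h4⟩ | ⟨h1, h2, h3, h4⟩) <;>
    rw [mem_vdil] at h1 h2 h3 h4 <;> push_neg at h3 h4
  · -- (i-1,j-1), (i,j) ∈ vdil T, (i-1,j), (i,j-1) ∉ vdil T
    have e1 : (i - 1, j - 1 - 1) ∈ T := by tauto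
    have e2 : (i, j) ∈ T := by tauto
    have := Hcp hcp (i₁ := i - 1) (i₂ := i) (by ring) (rfl : j - 1 - 1 + 1 = j - 1 - 1 + 1)
      (show j = j - 1 - 1 + 2 from by ring) (Or.inl e1) (Or.inr e2)
    rcases this with h | h
    · exact h3.2 (by rwa [show j - 1 - 1 + 1 = j - 1 from by ring] at h)
    · exact h4.1 (by rwa [show j - 1 - 1 + 1 = j - 1 from by ring] at h)
  · -- (i-1,j), (i,j-1) ∈ vdil T, (i-1,j-1), (i,j) ∉ vdil T
    have e1 : (i - 1, j) ∈ T := by tauto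
    have e2 : (i, j - 1 - 1) ∈ T := by tauto
    have := Hcp hcp (i₁ := i - 1) (i₂ := i) (by ring) (rfl : j - 1 - 1 + 1 = j - 1 - 1 + 1)
      (show j = j - 1 - 1 + 2 from by ring) (Or.inr e2) (Or.inl e1)
    rcases this with h | h
    · exact h3.1 (by rwa [show j - 1 - 1 + 1 = j - 1 from by ring] at h)
    · exact h4.2 (by rwa [show j - 1 - 1 + 1 = j - 1 from by ring] at h)

lemma ml_hdil (hrp : ∀ j, Adm1 1 (row T j ∪ row T (j + 1))) : ManifoldLike (hdil T) := by
  intro i j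
  rintro (⟨h1, h2, h3, h4⟩ | ⟨h1, h2, h3, h4⟩) <;>
    rw [mem_hdil] at h1 h2 h3 h4 <;> push_neg at h3 h4
  · -- (i-1,j-1), (i,j) ∈ hdil T, (i-1,j), (i,j-1) ∉ hdil T
    have e1 : (i - 1 - 1, j - 1) ∈ T := by tauto
    have e2 : (i, j) ∈ T := by tauto
    have := Hrp hrp (j₁ := j - 1) (j₂ := j) (by ring)
      (rfl : i - 1 - 1 + 1 = i - 1 - 1 + 1) (show i = i - 1 - 1 + 2 from by ring)
      (Or.inl e1) (Or.inr e2)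
    rcases this with h | h
    · exact h4.2 (by rwa [show i - 1 - 1 + 1 = i - 1 from by ring] at h)
    · exact h3.1 (by rwa [show i - 1 - 1 + 1 = i - 1 from by ring] at h)
  · -- (i-1,j), (i,j-1) ∈ hdil T, (i-1,j-1), (i,j) ∉ hdil T
    have e1 : (i - 1 - 1, j) ∈ T := by tauto
    have e2 : (i, j - 1) ∈ T := by tauto
    have := Hrp hrp (j₁ := j - 1) (j₂ := j) (by ring)
      (rfl : i - 1 - 1 + 1 = i - 1 - 1 + 1) (show i = i - 1 - 1 + 2 from by ring)
      (Or.inr e1) (Or.inl e2)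
    rcases this with h | h
    · exact h3.1 (by rwa [show i - 1 - 1 + 1 = i - 1 from by ring] at h)
    · exact h4.2 (by rwa [show i - 1 - 1 + 1 = i - 1 from by ring] at h)

end Helpers

/-! ### The exchange lemma -/

lemma exchange (T : Finset (ℤ × ℤ)) :
    (A201 T ∧ A210 (vdil T)) ↔ (A210 T ∧ A201 (hdil T)) := by
  constructor
  · rintro ⟨⟨hml, hca⟩, hmlv, hrav⟩
    have hcs : ∀ i, Adm1 1 (col T i) := fun i => (hca i).1
    have hcp : ∀ i, Adm1 1 (col T i ∪ col T (i + 1)) := fun i => (hca i).2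
    have hrp : ∀ j, Adm1 1 (row T j ∪ row T (j + 1)) := by
      intro j
      have := (hrav (j + 1)).1
      rwa [row_vdil, add_sub_cancel_right] at this
    have hrt : ∀ j, Adm1 1 (row T j ∪ row T (j + 1) ∪ row T (j + 2)) := by
      intro j
      have := (hrav (j + 1)).2
      rw [row_vdil, row_vdil, add_sub_cancel_right, add_sub_cancel_right,
        union_merge] at this
      rwa [show j + 1 + 1 = j + 2 from by ring] at this
    refine ⟨⟨hml, fun j => ⟨rows_single hcs hrp j, hrp j⟩⟩, ml_hdil hrp, fun i => ⟨?_, ?_⟩⟩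
    · rw [col_hdil]
      have := hcp (i - 1)
      rwa [show i - 1 + 1 = i from by ring] at this
    · rw [col_hdil, col_hdil, add_sub_cancel_right, union_merge]
      have := cols_triple hcp hrt (i - 1)
      rwa [show i - 1 + 1 = i from by ring, show i - 1 + 2 = i + 1 from by ring] at this
  · rintro ⟨⟨hml, hra⟩, hmlh, hcah⟩
    have hrs : ∀ j, Adm1 1 (row T j) := fun j => (hra j).1
    have hrp : ∀ j, Adm1 1 (row T j ∪ row T (j + 1)) := fun j => (hra j).2
    have hcp : ∀ i, Adm1 1 (col T i ∪ col T (i + 1)) := by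
      intro i
      have := (hcah (i + 1)).1
      rwa [col_hdil, add_sub_cancel_right] at this
    have hct : ∀ i, Adm1 1 (col T i ∪ col T (i + 1) ∪ col T (i + 2)) := by
      intro i
      have := (hcah (i + 1)).2
      rw [col_hdil, col_hdil, add_sub_cancel_right, add_sub_cancel_right,
        union_merge] at this
      rwa [show i + 1 + 1 = i + 2 from by ring] at this
    refine ⟨⟨hml, fun i => ⟨cols_single hrs hcp i, hcp i⟩⟩, ml_vdil hcp, fun j => ⟨?_, ?_⟩⟩
    · rw [row_vdil]
      have := hrp (j - 1)
      rwa [show j - 1 + 1 = j from by ring] at this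
    · rw [row_vdil, row_vdil, add_sub_cancel_right, union_merge]
      have := rows_triple hrp hct (j - 1)
      rwa [show j - 1 + 1 = j from by ring, show j - 1 + 2 = j + 1 from by ring] at this

/-! ### Dilatation plumbing -/

lemma hdil_vdil_comm : Function.Commute hdil vdil := by
  intro S
  ext ⟨x, y⟩
  simp only [Function.comp_apply, mem_hdil, mem_vdil]
  tauto

lemma dil_succ_left (S : Finset (ℤ × ℤ)) (a b : ℕ) :
    dil S (a + 1) b = hdil (dil S a b) := by
  simp [dil, Function.iterate_succ_apply']

lemma dil_succ_right (S : Finset (ℤ × ℤ)) (a b : ℕ) :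
    dil S a (b + 1) = vdil (dil S a b) := by
  simp only [dil, Function.iterate_succ_apply']
  exact (hdil_vdil_comm.iterate_left a) _

/-! ### The main induction -/

lemma key (b : ℕ) : ∀ a : ℕ, ∀ S : Finset (ℤ × ℤ),
    (A2 a (b + 1) S ∧ A210 (dil S a (b + 1))) ↔
      (A2 (a + 1) b S ∧ A201 (dil S (a + 1) b)) := by
  intro a
  induction a with
  | zero =>
    intro S
    rw [dil_succ_right S 0 b, dil_succ_left S 0 b]
    have e1 : A2 0 (b + 1) S = (A2 0 b S ∧ A201 (dil S 0 b)) := by simp [A2]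
    have e2 : A2 (0 + 1) b S = (A2 0 b S ∧ A210 (dil S 0 b)) := by simp [A2]
    rw [e1, e2]
    constructor
    · rintro ⟨⟨hP, h1⟩, h2⟩
      obtain ⟨h3, h4⟩ := (exchange _).mp ⟨h1, h2⟩
      exact ⟨⟨hP, h3⟩, h4⟩
    · rintro ⟨⟨hP, h3⟩, h4⟩
      obtain ⟨h1, h2⟩ := (exchange _).mpr ⟨h3, h4⟩
      exact ⟨⟨hP, h1⟩, h2⟩
  | succ n ih =>
    intro S
    rw [dil_succ_right S (n + 1) b, dil_succ_left S (n + 1) b]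
    have e1 : A2 (n + 1) (b + 1) S = (A2 n (b + 1) S ∧ A210 (dil S n (b + 1))) := by
      simp [A2]
    have e2 : A2 (n + 1 + 1) b S = (A2 (n + 1) b S ∧ A210 (dil S (n + 1) b)) := by
      simp [A2]
    rw [e1, e2, ih S]
    constructor
    · rintro ⟨⟨hQ, h1⟩, h2⟩
      obtain ⟨h3, h4⟩ := (exchange _).mp ⟨h1, h2⟩
      exact ⟨⟨hQ, h3⟩, h4⟩
    · rintro ⟨⟨hQ, h3⟩, h4⟩
      obtain ⟨h1, h2⟩ := (exchange _).mpr ⟨h3, h4⟩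
      exact ⟨⟨hQ, h1⟩, h2⟩

end Stmt15Aux

/-- Equivalence of the two inductive definitions of the admissible class `A²_{k₁,k₂}`:
for `k₁, k₂ > 0`,
`{Ω ∈ A²_{k₁−1,k₂} : Ω^e_{k₁−1,k₂} ∈ A²_{1,0}} = {Ω ∈ A²_{k₁,k₂−1} : Ω^e_{k₁,k₂−1} ∈ A²_{0,1}}`. -/
theorem stmt15 (k₁ k₂ : ℕ) (hk₁ : 1 ≤ k₁) (hk₂ : 1 ≤ k₂) :
    {S : Finset (ℤ × ℤ) | A2 (k₁ - 1) k₂ S ∧ A210 (dil S (k₁ - 1) k₂)}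
      = {S : Finset (ℤ × ℤ) | A2 k₁ (k₂ - 1) S ∧ A201 (dil S k₁ (k₂ - 1))} := by
  obtain ⟨a, rfl⟩ : ∃ a, k₁ = a + 1 := ⟨k₁ - 1, by omega⟩
  obtain ⟨b, rfl⟩ : ∃ b, k₂ = b + 1 := ⟨k₂ - 1, by omega⟩
  simp only [Nat.add_sub_cancel]
  ext S
  simpa using Stmt15Aux.key b a S
end
end

section
/- Slice-intersection admissibility: let Ω ∈ A²_{k₁,k₂} and let H_i, H_{i+1} be the horizontal projections of the rows of cells Ω^h_i, Ω^h_{i+1} of Ω in adjacent cell-rows i, i+1. Then H_i ∩ H_{i+1} = Ω^h_i ∩ Ω^h_{i+1} (as 1D domains) belongs to A¹_{k₁}. Similarly, for adjacent columns, V_j ∩ V_{j+1} ∈ A¹_{k₂}. -/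
open Set

noncomputable section

/-! ### Auxiliary lemmas -/

/-- One-step 1D dilatation. -/
def dS (A : Set ℤ) : Set ℤ := {x | x ∈ A ∨ x - 1 ∈ A}

lemma mem_dS {A : Set ℤ} {x : ℤ} : x ∈ dS A ↔ x ∈ A ∨ x - 1 ∈ A := Iff.rfl

lemma mem_dS_iterate (t : ℕ) (A : Set ℤ) : ∀ x : ℤ,
    x ∈ dS^[t] A ↔ ∃ s, x - t ≤ s ∧ s ≤ x ∧ s ∈ A := by
  induction t with
  | zero =>
    intro x
    simp only [Function.iterate_zero_apply, Nat.cast_zero]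
    constructor
    · intro h; exact ⟨x, by omega, le_refl x, h⟩
    · rintro ⟨s, h1, h2, h3⟩
      have : s = x := by omega
      subst this; exact h3
  | succ n ih =>
    intro x
    rw [Function.iterate_succ_apply']
    constructor
    · rintro (h | h)
      · obtain ⟨s, h1, h2, h3⟩ := (ih x).mp h
        exact ⟨s, by push_cast; omega, h2, h3⟩
      · obtain ⟨s, h1, h2, h3⟩ := (ih (x - 1)).mp h
        exact ⟨s, by push_cast; omega, by omega, h3⟩
    · rintro ⟨s, h1, h2, h3⟩
      rcases le_or_gt s (x - 1) with hle | hgt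
      · exact Or.inr ((ih (x - 1)).mpr ⟨s, by push_cast at h1 ⊢; omega, hle, h3⟩)
      · have hsx : s = x := by omega
        exact Or.inl ((ih x).mpr ⟨s, by omega, by omega, h3⟩)

lemma row_hdil (T : Finset (ℤ × ℤ)) (m : ℤ) : row (hdil T) m = dS (row T m) := by
  ext x
  simp only [row, hdil, dS, Finset.mem_union, Finset.mem_image, Set.mem_setOf_eq, Prod.ext_iff]
  constructor
  · rintro (h | ⟨⟨p1, p2⟩, hp, h1, h2⟩)
    · exact Or.inl h
    · right
      simp only at h1 h2
      have : p1 = x - 1 := by omega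
      subst this; subst h2
      exact hp
  · rintro (h | h)
    · exact Or.inl h
    · exact Or.inr ⟨(x - 1, m), h, by simp, by simp⟩

lemma row_vdil (T : Finset (ℤ × ℤ)) (m : ℤ) : row (vdil T) m = row T m ∪ row T (m - 1) := by
  ext x
  simp only [row, vdil, Finset.mem_union, Finset.mem_image, Set.mem_setOf_eq,
    Set.mem_union, Prod.ext_iff]
  constructor
  · rintro (h | ⟨⟨p1, p2⟩, hp, h1, h2⟩)
    · exact Or.inl h
    · right
      simp only at h1 h2
      have : p2 = m - 1 := by omega
      subst this; subst h1
      exact hp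
  · rintro (h | h)
    · exact Or.inl h
    · exact Or.inr ⟨(x, m - 1), h, by simp, by simp⟩

lemma col_vdil (T : Finset (ℤ × ℤ)) (i : ℤ) : col (vdil T) i = dS (col T i) := by
  ext x
  simp only [col, vdil, dS, Finset.mem_union, Finset.mem_image, Set.mem_setOf_eq, Prod.ext_iff]
  constructor
  · rintro (h | ⟨⟨p1, p2⟩, hp, h1, h2⟩)
    · exact Or.inl h
    · right
      simp only at h1 h2
      have : p2 = x - 1 := by omega
      subst this; subst h1
      exact hp
  · rintro (h | h)
    · exact Or.inl h
    · exact Or.inr ⟨(i, x - 1), h, by simp, by simp⟩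

lemma row_hdil_iterate (t : ℕ) (T : Finset (ℤ × ℤ)) (m : ℤ) :
    row (hdil^[t] T) m = dS^[t] (row T m) := by
  induction t generalizing T with
  | zero => rfl
  | succ n ih =>
    rw [Function.iterate_succ_apply, Function.iterate_succ_apply, ih (hdil T), row_hdil]

lemma col_vdil_iterate (t : ℕ) (T : Finset (ℤ × ℤ)) (i : ℤ) :
    col (vdil^[t] T) i = dS^[t] (col T i) := by
  induction t generalizing T with
  | zero => rfl
  | succ n ih =>
    rw [Function.iterate_succ_apply, Function.iterate_succ_apply, ih (vdil T), col_vdil]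

/-- Interval-filling: a pair of points of an `A¹_k` domain at gap distance at most `k`
has the whole interval between them inside the domain. -/
lemma adm1_fill {k : ℤ} {A : Set ℤ} (hA : Adm1 k A) {a b : ℤ} (ha : a ∈ A) (hb : b ∈ A)
    (hk : b - a - 1 ≤ k) : ∀ c, a ≤ c → c ≤ b → c ∈ A := by
  intro c hac hcb
  by_contra hc
  have hac' : a < c := lt_of_le_of_ne hac (by rintro rfl; exact hc ha)
  have hcb' : c < b := lt_of_le_of_ne hcb (by rintro rfl; exact hc hb)
  obtain ⟨a', ⟨ha'A, ha'1, ha'2⟩, ha'max⟩ :=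
    Int.exists_greatest_of_bdd (P := fun z => z ∈ A ∧ a ≤ z ∧ z < c)
      ⟨c, fun z hz => le_of_lt hz.2.2⟩ ⟨a, ha, le_refl a, hac'⟩
  obtain ⟨b', ⟨hb'A, hb'1, hb'2⟩, hb'min⟩ :=
    Int.exists_least_of_bdd (P := fun z => z ∈ A ∧ c < z ∧ z ≤ b)
      ⟨c, fun z hz => le_of_lt hz.2.1⟩ ⟨b, hb, hcb', le_refl b⟩
  have hbw : ∀ e : ℤ, a' < e → e < b' → e ∉ A := by
    intro e he1 he2 heA
    rcases lt_trichotomy e c with h | h | h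
    · exact absurd (ha'max e ⟨heA, by omega, h⟩) (by omega)
    · exact hc (h ▸ heA)
    · exact absurd (hb'min e ⟨heA, h, by omega⟩) (by omega)
  rcases hA a' b' ha'A hb'A (by omega) hbw with h | h <;> omega

/-- `A¹_k` is closed under intersection. -/
lemma adm1_inter {k : ℤ} {A B : Set ℤ} (hA : Adm1 k A) (hB : Adm1 k B) :
    Adm1 k (A ∩ B) := by
  intro a b ha hb hab hbw
  by_contra hcon
  push_neg at hcon
  obtain ⟨h1, h2⟩ := hcon
  have hAm := adm1_fill hA ha.1 hb.1 (by omega) (a + 1) (by omega) (by omega)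
  have hBm := adm1_fill hB ha.2 hb.2 (by omega) (a + 1) (by omega) (by omega)
  exact hbw (a + 1) (by omega) (by omega) ⟨hAm, hBm⟩

/-- If all iterated dilatations up to order `k-1` of a 1D domain are in `A¹₁`,
then the domain is in `A¹_k`. -/
lemma adm1_of_dS (k : ℕ) (A : Set ℤ)
    (h : ∀ t : ℕ, t < k → Adm1 1 (dS^[t] A)) : Adm1 (k : ℤ) A := by
  intro a b ha hb hab hbw
  by_contra hcon
  push_neg at hcon
  obtain ⟨h1, h2⟩ := hcon
  have hg1 : 1 ≤ b - a - 1 := by omega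
  obtain ⟨t, ht⟩ : ∃ t : ℕ, (t : ℤ) = b - a - 2 := ⟨(b - a - 2).toNat, by omega⟩
  have htk : t < k := by omega
  have hadm := h t htk
  have hb2 : b - 2 ∈ dS^[t] A := (mem_dS_iterate t A _).mpr ⟨a, by omega, by omega, ha⟩
  have hbm : b ∈ dS^[t] A := (mem_dS_iterate t A _).mpr ⟨b, by omega, le_refl b, hb⟩
  have hbmid : ∀ c : ℤ, b - 2 < c → c < b → c ∉ dS^[t] A := by
    intro c hc1 hc2 hcA
    obtain ⟨s, hs1, hs2, hs3⟩ := (mem_dS_iterate t A _).mp hcA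
    exact hbw s (by omega) (by omega) hs3
  rcases hadm (b - 2) b hb2 hbm (by omega) hbmid with h | h <;> omega

/-- One descent step: from `A¹_k`-admissibility of the rows of the vertical dilatation
(equivalently: of all two-row unions) and `A¹₁`-admissibility of columns, deduce
`A¹_k`-admissibility of the rows themselves. -/
lemma descend_one {k : ℤ} {T : Finset (ℤ × ℤ)}
    (hcol : ∀ i, Adm1 1 (col T i))
    (hrow : ∀ m, Adm1 k (row T m ∪ row T (m + 1)))
    (j : ℤ) : Adm1 k (row T j) := by
  intro a b ha hb hab hbw
  by_contra hcon
  push_neg at hcon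
  obtain ⟨h1, h2⟩ := hcon
  have hmid : a + 1 ∉ row T j := hbw (a + 1) (by omega) (by omega)
  have hup : a + 1 ∈ row T (j + 1) := by
    have hfill := adm1_fill (hrow j) (Or.inl ha : a ∈ row T j ∪ row T (j + 1))
      (Or.inl hb) (by omega) (a + 1) (by omega) (by omega)
    rcases hfill with h | h
    · exact absurd h hmid
    · exact h
  have hdown : a + 1 ∈ row T (j - 1) := by
    have hr := hrow (j - 1)
    rw [show j - 1 + 1 = j by ring] at hr
    have hfill := adm1_fill hr (Or.inr ha : a ∈ row T (j - 1) ∪ row T j)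
      (Or.inr hb) (by omega) (a + 1) (by omega) (by omega)
    rcases hfill with h | h
    · exact h
    · exact absurd h hmid
  have hcolbw : ∀ c : ℤ, j - 1 < c → c < j + 1 → c ∉ col T (a + 1) := by
    intro c hc1 hc2 hcA
    have : c = j := by omega
    subst this
    exact hmid hcA
  rcases hcol (a + 1) (j - 1) (j + 1) hdown hup (by omega) hcolbw with h | h <;> omega

/-- Iterated descent through vertical dilatations. -/
lemma descend_iter (k : ℤ) : ∀ (n : ℕ) (T : Finset (ℤ × ℤ)),
    (∀ r : ℕ, r < n → ∀ i, Adm1 1 (col (vdil^[r] T) i)) →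
    (∀ m, Adm1 k (row (vdil^[n] T) m)) →
    ∀ m, Adm1 k (row T m) := by
  intro n
  induction n with
  | zero => intro T _ h; exact h
  | succ n ih =>
    intro T hcol hrow
    have hrow' : ∀ m, Adm1 k (row (vdil T) m) := by
      apply ih (vdil T)
      · intro r hr i
        have := hcol (r + 1) (by omega) i
        rwa [Function.iterate_succ_apply] at this
      · intro m
        have := hrow m
        rwa [Function.iterate_succ_apply] at this
    have hcol0 : ∀ i, Adm1 1 (col T i) := by
      intro i
      have := hcol 0 (by omega) i
      rwa [Function.iterate_zero_apply] at this
    apply descend_one hcol0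
    intro m
    have := hrow' (m + 1)
    rw [row_vdil, show m + 1 - 1 = m by ring, Set.union_comm] at this
    exact this

/-! ### Extraction from the inductive definition of `A2` -/

lemma A2_succ_left (k₁ k₂ : ℕ) (S : Finset (ℤ × ℤ)) :
    A2 (k₁ + 1) k₂ S ↔ A2 k₁ k₂ S ∧ A210 (dil S k₁ k₂) := by
  rw [A2]

lemma A2_zero_succ (k₂ : ℕ) (S : Finset (ℤ × ℤ)) :
    A2 0 (k₂ + 1) S ↔ A2 0 k₂ S ∧ A201 (dil S 0 k₂) := by
  rw [A2]

lemma A2_zero_zero (S : Finset (ℤ × ℤ)) : A2 0 0 S ↔ ManifoldLike S := by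
  rw [A2]

lemma A2_zero_left : ∀ (k₁ k₂ : ℕ) (S : Finset (ℤ × ℤ)), A2 k₁ k₂ S → A2 0 k₂ S
  | 0, _, _, h => h
  | k₁ + 1, k₂, S, h => A2_zero_left k₁ k₂ S ((A2_succ_left k₁ k₂ S).mp h).1

lemma A2_manifold : ∀ (k₁ k₂ : ℕ) (S : Finset (ℤ × ℤ)), A2 k₁ k₂ S → ManifoldLike S
  | 0, 0, S, h => (A2_zero_zero S).mp h
  | 0, k₂ + 1, S, h => A2_manifold 0 k₂ S ((A2_zero_succ k₂ S).mp h).1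
  | k₁ + 1, k₂, S, h => A2_manifold k₁ k₂ S ((A2_succ_left k₁ k₂ S).mp h).1

lemma A2_A210 : ∀ (k₁ k₂ : ℕ) (S : Finset (ℤ × ℤ)), A2 k₁ k₂ S →
    ∀ t, t < k₁ → A210 (dil S t k₂)
  | 0, _, _, _, t, ht => absurd ht (by omega)
  | k₁ + 1, k₂, S, h, t, ht => by
    rw [A2_succ_left] at h
    rcases Nat.lt_succ_iff_lt_or_eq.mp ht with h' | rfl
    · exact A2_A210 k₁ k₂ S h.1 t h'
    · exact h.2

lemma A2_A201 : ∀ (k₂ : ℕ) (S : Finset (ℤ × ℤ)), A2 0 k₂ S →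
    ∀ r, r < k₂ → A201 (dil S 0 r)
  | 0, _, _, r, hr => absurd hr (by omega)
  | k₂ + 1, S, h, r, hr => by
    rw [A2_zero_succ] at h
    rcases Nat.lt_succ_iff_lt_or_eq.mp hr with h' | rfl
    · exact A2_A201 k₂ S h.1 r h'
    · exact h.2

/-! ### Manifold consequences and the set equality -/

lemma manifold_diag1 {S : Finset (ℤ × ℤ)} (hM : ManifoldLike S) {a j : ℤ}
    (h1 : (a, j) ∈ S) (h2 : (a + 1, j + 1) ∈ S) : (a, j + 1) ∈ S ∨ (a + 1, j) ∈ S := by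
  by_contra hc
  push_neg at hc
  refine hM (a + 1) (j + 1) (Or.inl ⟨?_, h2, ?_, ?_⟩)
  · simpa using h1
  · simpa using hc.1
  · simpa using hc.2

lemma manifold_diag2 {S : Finset (ℤ × ℤ)} (hM : ManifoldLike S) {a j : ℤ}
    (h1 : (a, j + 1) ∈ S) (h2 : (a + 1, j) ∈ S) : (a, j) ∈ S ∨ (a + 1, j + 1) ∈ S := by
  by_contra hc
  push_neg at hc
  refine hM (a + 1) (j + 1) (Or.inr ⟨?_, ?_, ?_, ?_⟩)
  · simpa using h1
  · simpa using h2
  · simpa using hc.1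
  · simpa using hc.2

lemma union_Icc_inter (A B : Set ℤ)
    (h1 : ∀ a : ℤ, a ∈ A → a + 1 ∈ B → a ∈ B ∨ a + 1 ∈ A)
    (h2 : ∀ a : ℤ, a ∈ B → a + 1 ∈ A → a ∈ A ∨ a + 1 ∈ B) :
    (⋃ i ∈ A, Set.Icc (i : ℝ) (i + 1)) ∩ (⋃ i ∈ B, Set.Icc (i : ℝ) (i + 1))
      = ⋃ i ∈ A ∩ B, Set.Icc (i : ℝ) (i + 1) := by
  ext x
  simp only [Set.mem_inter_iff, Set.mem_iUnion, exists_prop]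
  constructor
  · rintro ⟨⟨a, ha, hxa⟩, ⟨b, hb, hxb⟩⟩
    rcases lt_trichotomy a b with hab | rfl | hab
    · have hba : b = a + 1 := by
        have hle : (b : ℝ) ≤ (a : ℝ) + 1 := le_trans hxb.1 hxa.2
        have : (b : ℤ) ≤ a + 1 := by exact_mod_cast hle
        omega
      subst hba
      rcases h1 a ha hb with h | h
      · exact ⟨a, ⟨ha, h⟩, hxa⟩
      · exact ⟨a + 1, ⟨h, hb⟩, hxb⟩
    · exact ⟨a, ⟨ha, hb⟩, hxa⟩
    · have hba : a = b + 1 := by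
        have hle : (a : ℝ) ≤ (b : ℝ) + 1 := le_trans hxa.1 hxb.2
        have : (a : ℤ) ≤ b + 1 := by exact_mod_cast hle
        omega
      subst hba
      rcases h2 b hb ha with h | h
      · exact ⟨b, ⟨h, hb⟩, hxb⟩
      · exact ⟨b + 1, ⟨ha, h⟩, hxa⟩
  · rintro ⟨a, ⟨ha1, ha2⟩, hx⟩
    exact ⟨⟨a, ha1, hx⟩, ⟨a, ha2, hx⟩⟩


/-- Slice-intersection admissibility: for `Ω ∈ A²_{k₁,k₂}`, the intersections of
adjacent horizontal slices are in `A¹_{k₁}` (and equal, as 1D domains, the intersections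
of the corresponding rows of cells), and those of adjacent vertical slices in `A¹_{k₂}`. -/
theorem stmt16 (k₁ k₂ : ℕ) (S : Finset (ℤ × ℤ)) (hS : A2 k₁ k₂ S) :
    (∀ j : ℤ,
      (⋃ i ∈ row S j, Set.Icc (i : ℝ) (i + 1)) ∩
          (⋃ i ∈ row S (j + 1), Set.Icc (i : ℝ) (i + 1))
        = ⋃ i ∈ row S j ∩ row S (j + 1), Set.Icc (i : ℝ) (i + 1) ∧
      Adm1 (k₁ : ℤ) (row S j ∩ row S (j + 1))) ∧
    (∀ i : ℤ,
      (⋃ j ∈ col S i, Set.Icc (j : ℝ) (j + 1)) ∩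
          (⋃ j ∈ col S (i + 1), Set.Icc (j : ℝ) (j + 1))
        = ⋃ j ∈ col S i ∩ col S (i + 1), Set.Icc (j : ℝ) (j + 1) ∧
      Adm1 (k₂ : ℤ) (col S i ∩ col S (i + 1))) := by
  
  have hM : ManifoldLike S := A2_manifold k₁ k₂ S hS
  have h201 := A2_A201 k₂ S (A2_zero_left k₁ k₂ S hS)
  have h210 := A2_A210 k₁ k₂ S hS
  have hcolS : ∀ i, Adm1 (k₂ : ℤ) (col S i) := by
    intro i
    apply adm1_of_dS
    intro r hr
    have := ((h201 r hr).2 i).1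
    simp only [dil, Function.iterate_zero_apply] at this
    rwa [col_vdil_iterate] at this
  have hrowV : ∀ m, Adm1 (k₁ : ℤ) (row (vdil^[k₂] S) m) := by
    intro m
    apply adm1_of_dS
    intro t ht
    have := ((h210 t ht).2 m).1
    simp only [dil] at this
    rwa [row_hdil_iterate] at this
  have hcolr : ∀ r : ℕ, r < k₂ → ∀ i, Adm1 1 (col (vdil^[r] S) i) := by
    intro r hr i
    have := ((h201 r hr).2 i).1
    simpa only [dil, Function.iterate_zero_apply] using this
  have hrowS : ∀ m, Adm1 (k₁ : ℤ) (row S m) := descend_iter _ k₂ S hcolr hrowV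
  constructor
  · intro j
    refine ⟨union_Icc_inter _ _ ?_ ?_, adm1_inter (hrowS j) (hrowS (j + 1))⟩
    · intro a haA haB
      rcases manifold_diag1 hM haA haB with h | h
      · exact Or.inl h
      · exact Or.inr h
    · intro a haB haA
      rcases manifold_diag2 hM haB haA with h | h
      · exact Or.inl h
      · exact Or.inr h
  · intro i
    refine ⟨union_Icc_inter _ _ ?_ ?_, adm1_inter (hcolS i) (hcolS (i + 1))⟩
    · intro a haA haB
      rcases manifold_diag1 hM haA haB with h | h
      · exact Or.inr h
      · exact Or.inl h
    · intro a haB haA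
      rcases manifold_diag2 hM haA haB with h | h
      · exact Or.inl h
      · exact Or.inr h
end
end
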